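/- arXiv:2402.11787 — 6 statements merged into one kernel-verified Lean document; each statement's English description precedes it below -/
import Mathlib

section
/- Let d, n be positive integers, let -1 ≤ β < α < 1 with β < 0, and set μ = (1-β)/(α-β). Let S = {u₁,…,uₙ} be a spherical {α,β}-code in ℝ^d of rank r, and let A be the adjacency matrix of the associated α-graph Γ_α(S). Then the all-ones vector j lies in the column space of A + μI; moreover, for every {1}-inverse N of A + μI one has jᵀNj ≤ (α-β)/(-β), and rank(A + μI) = r + 1 if jᵀNj = (α-β)/(-β), while rank(A + μI) = r otherwise. -/
/-!
Let `G` be the Gram matrix of the code and `J = j jᵀ`. The diagonal of `G` is `1` and its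
off-diagonal entries are `α` or `β`, so `(α - β) (A + μI) = G - β J`: a positive semidefinite
matrix of rank `r` plus a positive multiple `c` of `j jᵀ`. For such an update `M = G + c j jᵀ` the
quadratic form `xᵀ M x = xᵀ G x + c (jᵀ x)²` shows `ker M = ker G ∩ j^⊥`, so by symmetry the column
space of `M` is `col G + ℝ j`. If `M x = j` and `s = jᵀ x`, then `jᵀ N j = s` for every
`{1}`-inverse `N`, `G x = (1 - c s) j`, and `s = xᵀ G x + c s² ≥ c s²` gives `s ≤ 1/c`. Finally
`j ∈ col G` exactly when `c s ≠ 1`, which decides whether the rank goes up by one.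
-/

open Matrix

noncomputable section

/-- The real inner product on `ℝ^d`. -/
def rinner {d : ℕ} (x y : EuclideanSpace ℝ (Fin d)) : ℝ := inner ℝ x y

lemma rinner_comm {d : ℕ} (x y : EuclideanSpace ℝ (Fin d)) : rinner x y = rinner y x :=
  real_inner_comm y x

/-- A spherical `{α, β}`-code in `ℝ^d`: a family of unit vectors whose pairwise inner
products of distinct vectors lie in `{α, β}`. -/
def IsSphericalCode (α β : ℝ) {d n : ℕ} (u : Fin n → EuclideanSpace ℝ (Fin d)) : Prop :=
  (∀ i, ‖u i‖ = 1) ∧ ∀ i j, i ≠ j → rinner (u i) (u j) = α ∨ rinner (u i) (u j) = β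

/-- Adjacency matrix of the associated `α`-graph `Γ_α(S)`. -/
def alphaAdj (α : ℝ) {d n : ℕ} (u : Fin n → EuclideanSpace ℝ (Fin d)) :
    Matrix (Fin n) (Fin n) ℝ :=
  Matrix.of fun i j => if i ≠ j ∧ rinner (u i) (u j) = α then 1 else 0

/-- The associated `α`-graph `Γ_α(S)` of a family of vectors: distinct vectors are
adjacent iff their inner product is `α`. -/
def alphaGraph (α : ℝ) {d n : ℕ} (u : Fin n → EuclideanSpace ℝ (Fin d)) :
    SimpleGraph (Fin n) where
  Adj i j := i ≠ j ∧ rinner (u i) (u j) = α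
  symm := ⟨fun i j h => ⟨h.1.symm, by rw [rinner_comm]; exact h.2⟩⟩
  loopless := ⟨fun i h => h.1 rfl⟩

open Module

namespace Matrix

theorem exists_mulVec_eq_of_forall_vecMul_eq_zero {K m n : Type*} [Field K] [Fintype m]
    [Fintype n] (M : Matrix m n K) (v : m → K)
    (h : ∀ x, x ᵥ* M = 0 → x ⬝ᵥ v = 0) : ∃ y, M *ᵥ y = v := by
  classical
  by_contra! hv
  obtain ⟨f, hfv, hf⟩ := (LinearMap.range M.mulVecLin).exists_dual_map_eq_bot_of_notMem
    (x := v) (by simpa using hv) inferInstance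
  obtain ⟨w, rfl⟩ := (dotProductEquiv K m).surjective f
  refine hfv (h w (funext fun j => ?_))
  show w ⬝ᵥ M.col j = 0
  have := Submodule.mem_map_of_mem (f := dotProductEquiv K m w)
    (LinearMap.mem_range_self M.mulVecLin (Pi.single j 1))
  rw [hf, Submodule.mem_bot] at this
  simpa [dotProduct_mulVec] using this

section Symmetric

variable {R n : Type*} [CommSemiring R] [Fintype n] {M : Matrix n n R}

theorem IsSymm.vecMul_eq_mulVec (hM : M.IsSymm) (x : n → R) : x ᵥ* M = M *ᵥ x := by
  rw [← vecMul_transpose, hM.eq]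

theorem IsSymm.dotProduct_mulVec_comm (hM : M.IsSymm) (x y : n → R) :
    x ⬝ᵥ (M *ᵥ y) = y ⬝ᵥ (M *ᵥ x) := by
  rw [dotProduct_mulVec, hM.vecMul_eq_mulVec, dotProduct_comm]

theorem IsSymm.dotProduct_mulVec_eq_of_mul_mul_eq {N : Matrix n n R} (hM : M.IsSymm)
    (hN : M * N * M = M) {x v : n → R} (hx : M *ᵥ x = v) : v ⬝ᵥ (N *ᵥ v) = x ⬝ᵥ v :=
  calc v ⬝ᵥ (N *ᵥ v) = (x ᵥ* M) ⬝ᵥ ((N * M) *ᵥ x) := by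
        rw [hM.vecMul_eq_mulVec, ← mulVec_mulVec, hx]
    _ = x ⬝ᵥ ((M * N * M) *ᵥ x) := by rw [← dotProduct_mulVec, mulVec_mulVec, Matrix.mul_assoc]
    _ = x ⬝ᵥ v := by rw [hN, hx]

end Symmetric

theorem IsSymm.add_smul_vecMulVec {R n : Type*} [CommSemiring R] {M : Matrix n n R}
    (hM : M.IsSymm) (c : R) (v : n → R) : (M + c • vecMulVec v v).IsSymm :=
  hM.add (IsSymm.smul (transpose_vecMulVec v v) c)

theorem IsSymm.exists_mulVec_eq {K n : Type*} [Field K] [Fintype n] {M : Matrix n n K}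
    (hM : M.IsSymm) (v : n → K) (h : ∀ x, M *ᵥ x = 0 → x ⬝ᵥ v = 0) : ∃ y, M *ᵥ y = v :=
  M.exists_mulVec_eq_of_forall_vecMul_eq_zero v fun x hx => h x (hM.vecMul_eq_mulVec x ▸ hx)

section RankOneUpdate

variable {K ι : Type*} [Field K] [Fintype ι] {G : Matrix ι ι K} {c : K} {v : ι → K}

theorem add_smul_vecMulVec_mulVec (x : ι → K) :
    (G + c • vecMulVec v v) *ᵥ x = G *ᵥ x + (c * (v ⬝ᵥ x)) • v := by
  rw [add_mulVec, smul_mulVec, vecMulVec_mulVec, op_smul_eq_smul, smul_smul]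

theorem dotProduct_add_smul_vecMulVec_mulVec (x : ι → K) :
    x ⬝ᵥ ((G + c • vecMulVec v v) *ᵥ x) = x ⬝ᵥ (G *ᵥ x) + c * (v ⬝ᵥ x) ^ 2 := by
  rw [add_smul_vecMulVec_mulVec, dotProduct_add, dotProduct_smul, smul_eq_mul,
    dotProduct_comm x v]
  ring

theorem IsSymm.mem_range_iff_of_add_smul_vecMulVec_mulVec_eq (hG : G.IsSymm) {x : ι → K}
    (hx : (G + c • vecMulVec v v) *ᵥ x = v) :
    v ∈ LinearMap.range G.mulVecLin ↔ c * (v ⬝ᵥ x) ≠ 1 := by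
  have hGx : G *ᵥ x = (1 - c * (v ⬝ᵥ x)) • v := by
    rw [sub_smul, one_smul, eq_sub_iff_add_eq, ← add_smul_vecMulVec_mulVec, hx]
  constructor
  · rintro ⟨y, hy⟩ hcs
    rw [hcs, sub_self, zero_smul] at hGx
    have : v ⬝ᵥ x = 0 := by
      rw [← hy, mulVecLin_apply, dotProduct_comm, hG.dotProduct_mulVec_comm, hGx, dotProduct_zero]
    simp [this] at hcs
  · intro hcs
    refine ⟨(1 - c * (v ⬝ᵥ x))⁻¹ • x, ?_⟩
    rw [mulVecLin_apply, mulVec_smul, hGx, smul_smul, inv_mul_cancel₀ (sub_ne_zero.2 hcs.symm),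
      one_smul]

end RankOneUpdate

namespace PosSemidef

protected theorem isSymm {ι : Type*} {G : Matrix ι ι ℝ} (hG : G.PosSemidef) : G.IsSymm :=
  isHermitian_iff_isSymm.1 hG.isHermitian

variable {ι : Type*} [Fintype ι] {G : Matrix ι ι ℝ} {c : ℝ} {v : ι → ℝ}

theorem mulVec_eq_zero_of_add_smul_vecMulVec_mulVec_eq_zero (hG : G.PosSemidef) (hc : 0 < c)
    {x : ι → ℝ} (hx : (G + c • vecMulVec v v) *ᵥ x = 0) : G *ᵥ x = 0 ∧ v ⬝ᵥ x = 0 := by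
  have hquad := dotProduct_add_smul_vecMulVec_mulVec (G := G) (c := c) (v := v) x
  rw [hx, dotProduct_zero] at hquad
  have hGx : 0 ≤ x ⬝ᵥ (G *ᵥ x) := by simpa using hG.dotProduct_mulVec_nonneg x
  have hvx : 0 ≤ c * (v ⬝ᵥ x) ^ 2 := by positivity
  refine ⟨(hG.dotProduct_mulVec_zero_iff x).1 (by simpa using by linarith), ?_⟩
  simpa [hc.ne'] using (by linarith : c * (v ⬝ᵥ x) ^ 2 = 0)

theorem range_add_smul_vecMulVec (hG : G.PosSemidef) (hc : 0 < c) :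
    LinearMap.range (G + c • vecMulVec v v).mulVecLin =
      LinearMap.range G.mulVecLin ⊔ Submodule.span ℝ {v} := by
  have hMs := hG.isSymm.add_smul_vecMulVec c v
  refine le_antisymm ?_ (sup_le ?_ ((Submodule.span_singleton_le_iff_mem _ _).2 ?_))
  · rintro _ ⟨x, rfl⟩
    rw [mulVecLin_apply, add_smul_vecMulVec_mulVec]
    exact add_mem (Submodule.mem_sup_left ⟨x, rfl⟩)
      (Submodule.mem_sup_right (Submodule.smul_mem _ _ (Submodule.mem_span_singleton_self v)))
  · rintro _ ⟨y, rfl⟩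
    obtain ⟨z, hz⟩ := hMs.exists_mulVec_eq (G *ᵥ y) fun x hx => by
      rw [hG.isSymm.dotProduct_mulVec_comm,
        (hG.mulVec_eq_zero_of_add_smul_vecMulVec_mulVec_eq_zero hc hx).1, dotProduct_zero]
    exact ⟨z, hz⟩
  · obtain ⟨z, hz⟩ := hMs.exists_mulVec_eq v fun x hx => by
      rw [dotProduct_comm]
      exact (hG.mulVec_eq_zero_of_add_smul_vecMulVec_mulVec_eq_zero hc hx).2
    exact ⟨z, hz⟩

theorem exists_add_smul_vecMulVec_mulVec_eq (hG : G.PosSemidef) (hc : 0 < c) :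
    ∃ x, (G + c • vecMulVec v v) *ᵥ x = v := by
  show v ∈ LinearMap.range (G + c • vecMulVec v v).mulVecLin
  rw [hG.range_add_smul_vecMulVec hc]
  exact Submodule.mem_sup_right (Submodule.mem_span_singleton_self v)

theorem dotProduct_le_inv_of_add_smul_vecMulVec_mulVec_eq (hG : G.PosSemidef) (hc : 0 < c)
    {x : ι → ℝ} (hx : (G + c • vecMulVec v v) *ᵥ x = v) : v ⬝ᵥ x ≤ c⁻¹ := by
  have hquad := dotProduct_add_smul_vecMulVec_mulVec (G := G) (c := c) (v := v) x
  rw [hx, dotProduct_comm x v] at hquad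
  have hGx : 0 ≤ x ⬝ᵥ (G *ᵥ x) := by simpa using hG.dotProduct_mulVec_nonneg x
  rw [← mul_le_mul_iff_right₀ hc, mul_inv_cancel₀ hc.ne']
  nlinarith

theorem dotProduct_mulVec_le_inv_of_mul_mul_eq (hG : G.PosSemidef) (hc : 0 < c)
    {N : Matrix ι ι ℝ}
    (hN : (G + c • vecMulVec v v) * N * (G + c • vecMulVec v v) = G + c • vecMulVec v v) :
    v ⬝ᵥ (N *ᵥ v) ≤ c⁻¹ := by
  obtain ⟨x, hx⟩ := hG.exists_add_smul_vecMulVec_mulVec_eq hc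
  rw [(hG.isSymm.add_smul_vecMulVec c v).dotProduct_mulVec_eq_of_mul_mul_eq hN hx, dotProduct_comm]
  exact hG.dotProduct_le_inv_of_add_smul_vecMulVec_mulVec_eq hc hx

theorem rank_add_smul_vecMulVec (hG : G.PosSemidef) (hc : 0 < c) {N : Matrix ι ι ℝ}
    (hN : (G + c • vecMulVec v v) * N * (G + c • vecMulVec v v) = G + c • vecMulVec v v) :
    (G + c • vecMulVec v v).rank = if v ⬝ᵥ (N *ᵥ v) = c⁻¹ then G.rank + 1 else G.rank := by
  obtain ⟨x, hx⟩ := hG.exists_add_smul_vecMulVec_mulVec_eq hc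
  have hrange := hG.isSymm.mem_range_iff_of_add_smul_vecMulVec_mulVec_eq hx
  rw [(hG.isSymm.add_smul_vecMulVec c v).dotProduct_mulVec_eq_of_mul_mul_eq hN hx, dotProduct_comm,
    rank, hG.range_add_smul_vecMulVec hc]
  split_ifs with hs
  · rw [Submodule.finrank_sup_span_singleton (by simp [hrange, hs, hc.ne'])]
    rfl
  · rw [sup_eq_left.2 ((Submodule.span_singleton_le_iff_mem _ _).2 (hrange.2 ?_))]
    · rfl
    · exact fun hcs => hs (eq_inv_of_mul_eq_one_right hcs)

end PosSemidef

theorem rank_gram {𝕜 E ι : Type*} [RCLike 𝕜] [NormedAddCommGroup E] [InnerProductSpace 𝕜 E]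
    [Fintype ι] (u : ι → E) :
    (gram 𝕜 u).rank = finrank 𝕜 (Submodule.span 𝕜 (Set.range u)) := by
  have hker : LinearMap.ker (gram 𝕜 u).mulVecLin =
      LinearMap.ker (Fintype.linearCombination 𝕜 u) := by
    ext x
    simp only [LinearMap.mem_ker, mulVecLin_apply,
      ← (posSemidef_gram 𝕜 u).dotProduct_mulVec_zero_iff, star_dotProduct_gram_mulVec,
      inner_self_eq_zero, Fintype.linearCombination_apply]
  have hG := LinearMap.finrank_range_add_finrank_ker (gram 𝕜 u).mulVecLin
  have hL := LinearMap.finrank_range_add_finrank_ker (Fintype.linearCombination 𝕜 u)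
  rw [Fintype.range_linearCombination, ← hker] at hL
  rw [rank]
  omega

end Matrix

theorem alphaAdj_add_smul_one_eq {α β : ℝ} {d n : ℕ} {u : Fin n → EuclideanSpace ℝ (Fin d)}
    (hu : IsSphericalCode α β u) (hβα : β < α) :
    alphaAdj α u + ((1 - β) / (α - β)) • (1 : Matrix (Fin n) (Fin n) ℝ) =
      (α - β)⁻¹ • gram ℝ u + (-β / (α - β)) • vecMulVec (fun _ => 1) (fun _ => 1) := by
  have hαβ : α - β ≠ 0 := (sub_pos.2 hβα).ne'
  ext i j
  simp only [Matrix.add_apply, Matrix.smul_apply, alphaAdj, rinner, of_apply, one_apply,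
    gram_apply, vecMulVec_apply, smul_eq_mul, mul_one]
  rcases eq_or_ne i j with rfl | hij
  · simp only [real_inner_self_eq_norm_sq, hu.1 i, ne_eq, not_true_eq_false, false_and,
      if_false, if_true]
    field_simp
    ring
  · rcases hu.2 i j hij with h | h <;> simp only [rinner] at h
    · simp only [hij, h, ne_eq, not_false_eq_true, and_self, if_true, if_false]
      field_simp
      ring
    · simp only [hij, h, hβα.ne, ne_eq, not_false_eq_true, and_false, if_false]
      field_simp
      ring

theorem stmt1_general (d n : ℕ)
    (α β μ : ℝ) (hβα : β < α) (hβ₀ : β < 0)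
    (hμ : μ = (1 - β) / (α - β))
    (u : Fin n → EuclideanSpace ℝ (Fin d)) (hu : IsSphericalCode α β u)
    (r : ℕ) (hr : r = Module.finrank ℝ (Submodule.span ℝ (Set.range u)))
    (M : Matrix (Fin n) (Fin n) ℝ)
    (hM : M = alphaAdj α u + μ • (1 : Matrix (Fin n) (Fin n) ℝ)) :
    (∃ x : Fin n → ℝ, M *ᵥ x = fun _ => 1) ∧
    ∀ N : Matrix (Fin n) (Fin n) ℝ, M * N * M = M →
      (fun _ => (1 : ℝ)) ⬝ᵥ (N *ᵥ fun _ => 1) ≤ (α - β) / (-β) ∧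
      M.rank =
        (if (fun _ => (1 : ℝ)) ⬝ᵥ (N *ᵥ fun _ => 1) = (α - β) / (-β) then r + 1 else r) := by
  have hαβ : 0 < α - β := sub_pos.2 hβα
  have hG : ((α - β)⁻¹ • gram ℝ u).PosSemidef :=
    (posSemidef_gram ℝ u).smul (inv_nonneg.2 hαβ.le)
  have hc : 0 < -β / (α - β) := div_pos (neg_pos.2 hβ₀) hαβ
  have hrank : ((α - β)⁻¹ • gram ℝ u).rank = r := by
    rw [rank_smul_of_mem_nonZeroDivisors _ (mem_nonZeroDivisors_of_ne_zero (inv_ne_zero hαβ.ne')),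
      rank_gram, hr]
  rw [hM, hμ, alphaAdj_add_smul_one_eq hu hβα, ← hrank, ← inv_div (-β)]
  exact ⟨hG.exists_add_smul_vecMulVec_mulVec_eq hc, fun N hN =>
    ⟨hG.dotProduct_mulVec_le_inv_of_mul_mul_eq hc hN, hG.rank_add_smul_vecMulVec hc hN⟩⟩

/-- for a spherical `{α,β}`-code of rank `r` with `β < 0` and
`μ = (1-β)/(α-β)`, the all-ones vector lies in the column space of `A + μI`, every
`{1}`-inverse `N` of `A + μI` satisfies `jᵀNj ≤ (α-β)/(-β)`, and `rank (A + μI)` is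
`r + 1` if `jᵀNj = (α-β)/(-β)` and `r` otherwise. -/
theorem stmt1 (d n : ℕ) (hd : 0 < d) (hn : 0 < n)
    (α β μ : ℝ) (hβ₁ : -1 ≤ β) (hβα : β < α) (hα : α < 1) (hβ₀ : β < 0)
    (hμ : μ = (1 - β) / (α - β))
    (u : Fin n → EuclideanSpace ℝ (Fin d)) (hu : IsSphericalCode α β u)
    (r : ℕ) (hr : r = Module.finrank ℝ (Submodule.span ℝ (Set.range u)))
    (M : Matrix (Fin n) (Fin n) ℝ)
    (hM : M = alphaAdj α u + μ • (1 : Matrix (Fin n) (Fin n) ℝ)) :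
    (∃ x : Fin n → ℝ, M *ᵥ x = fun _ => 1) ∧
    ∀ N : Matrix (Fin n) (Fin n) ℝ, M * N * M = M →
      (fun _ => (1 : ℝ)) ⬝ᵥ (N *ᵥ fun _ => 1) ≤ (α - β) / (-β) ∧
      M.rank =
        (if (fun _ => (1 : ℝ)) ⬝ᵥ (N *ᵥ fun _ => 1) = (α - β) / (-β) then r + 1 else r) :=
  stmt1_general d n α β μ hβα hβ₀ hμ u hu r hr M hM
end
end

section
/- Let -1 ≤ β < α < 1 with β < 0, and set μ = (1-β)/(α-β). Let G be an n-vertex graph with adjacency matrix A such that: A + μI is positive semidefinite, the all-ones vector j lies in the column space of A + μI, and jᵀNj ≤ (α-β)/(-β) for every {1}-inverse N of A + μI. Define r = rank(A + μI) - 1 if jᵀNj = (α-β)/(-β), and r = rank(A + μI) otherwise. Then there exists a spherical {α,β}-code S in ℝ^r of size n and rank r whose associated α-graph is G; that is, there are unit vectors u₁,…,uₙ in ℝ^r such that for all i ≠ j, uᵢ·uⱼ = α if vertices i and j are adjacent in G and uᵢ·uⱼ = β otherwise. -/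
open Matrix

noncomputable section

/-!
Put `J = j jᵀ`, `c = (α - β) / (-β)` and `H = (α - β) (M - c⁻¹ J)`; its diagonal entries are `1`
and its off-diagonal entries are `α` or `β` according to adjacency in `G`. Write `j = M x`. Every
{1}-inverse `N` of `M` gives `jᵀ N j = xᵀ M x`, and Cauchy–Schwarz for the semidefinite form `M`
gives `(jᵀ v)² = (xᵀ M v)² ≤ (xᵀ M x) (vᵀ M v)`, so `H` is positive semidefinite because
`xᵀ M x ≤ c`. The kernel of `M - c⁻¹ J` is that of `M`, enlarged by `x` exactly when `xᵀ M x = c`,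
whence `rank H = r`. Finally, a positive semidefinite matrix of rank `r` is the Gram matrix of
vectors spanning `ℝ^r`.
-/

namespace LinearMap

variable {K V W : Type*} [DivisionRing K] [AddCommGroup V] [Module K V] [AddCommGroup W]
  [Module K W]

theorem exists_comp_comp_eq_self (f : V →ₗ[K] W) : ∃ g : W →ₗ[K] V, f ∘ₗ g ∘ₗ f = f := by
  obtain ⟨p, hp⟩ :=
    (range f).subtype.exists_leftInverse_of_injective (Submodule.ker_subtype _)
  obtain ⟨s, hs⟩ := f.rangeRestrict.exists_rightInverse_of_surjective (range_rangeRestrict f)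
  refine ⟨s ∘ₗ p, ext fun v => ?_⟩
  have hpf : p (f v) = f.rangeRestrict v := LinearMap.congr_fun hp (f.rangeRestrict v)
  simpa [hpf] using congrArg Subtype.val (LinearMap.congr_fun hs (f.rangeRestrict v))

end LinearMap

namespace Matrix

section CommRing

variable {R n : Type*} [CommRing R] [Fintype n] {M : Matrix n n R} {x y : n → R}

theorem dotProduct_eq_dotProduct_mulVec_of_mulVec_eq (hM : Mᵀ = M) (hx : M *ᵥ x = y)
    (v : n → R) : y ⬝ᵥ v = x ⬝ᵥ M *ᵥ v := by
  rw [dotProduct_mulVec, ← mulVec_transpose, hM, hx]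

theorem dotProduct_mulVec_of_mul_mul_eq_self (hM : Mᵀ = M) (hx : M *ᵥ x = y)
    {N : Matrix n n R} (hN : M * N * M = M) : y ⬝ᵥ N *ᵥ y = x ⬝ᵥ y := by
  rw [dotProduct_eq_dotProduct_mulVec_of_mulVec_eq hM hx, ← hx, mulVec_mulVec,
    mulVec_mulVec, hN]

theorem sub_smul_vecMulVec_mulVec (t : R) (v : n → R) :
    (M - t • vecMulVec y y) *ᵥ v = M *ᵥ v - (t * (y ⬝ᵥ v)) • y := by
  ext i
  simp [sub_mulVec, smul_mulVec, vecMulVec_mulVec, mul_comm, mul_left_comm]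

end CommRing

section Field

variable {K m n : Type*} [Field K] [Fintype n]

theorem exists_mul_mul_eq_self [Fintype m] [DecidableEq m] [DecidableEq n] (A : Matrix m n K) :
    ∃ N : Matrix n m K, A * N * A = A := by
  obtain ⟨g, hg⟩ := (toLin' A).exists_comp_comp_eq_self
  refine ⟨LinearMap.toMatrix' g, toLin'.injective ?_⟩
  simpa only [toLin'_mul, toLin'_toMatrix', LinearMap.comp_assoc] using hg

theorem rank_add_finrank_ker (A : Matrix m n K) :
    A.rank + Module.finrank K (LinearMap.ker A.mulVecLin) = Fintype.card n := by
  simpa [rank] using A.mulVecLin.finrank_range_add_finrank_ker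

variable {M : Matrix n n K} {x y : n → K} {t : K}

theorem ker_mulVecLin_le_ker_sub_smul_vecMulVec (hM : Mᵀ = M) (hx : M *ᵥ x = y) :
    LinearMap.ker M.mulVecLin ≤ LinearMap.ker (M - t • vecMulVec y y).mulVecLin := by
  intro v hv
  simp only [LinearMap.mem_ker, mulVecLin_apply] at hv ⊢
  rw [sub_smul_vecMulVec_mulVec, dotProduct_eq_dotProduct_mulVec_of_mulVec_eq hM hx, hv]
  simp

theorem ker_sub_smul_vecMulVec_of_ne (hM : Mᵀ = M) (hx : M *ᵥ x = y)
    (ht : t * (x ⬝ᵥ y) ≠ 1) :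
    LinearMap.ker (M - t • vecMulVec y y).mulVecLin = LinearMap.ker M.mulVecLin := by
  refine le_antisymm (fun v hv => ?_) (ker_mulVecLin_le_ker_sub_smul_vecMulVec hM hx)
  simp only [LinearMap.mem_ker, mulVecLin_apply, sub_smul_vecMulVec_mulVec,
    sub_eq_zero] at hv ⊢
  have hyv : y ⬝ᵥ v = t * (y ⬝ᵥ v) * (x ⬝ᵥ y) := by
    conv_lhs => rw [dotProduct_eq_dotProduct_mulVec_of_mulVec_eq hM hx, hv]
    rw [dotProduct_smul, smul_eq_mul]
  have hyv₀ : y ⬝ᵥ v = 0 := by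
    have h : (1 - t * (x ⬝ᵥ y)) * (y ⬝ᵥ v) = 0 := by linear_combination hyv
    exact (mul_eq_zero.mp h).resolve_left (sub_ne_zero.mpr ht.symm)
  simp [hv, hyv₀]

theorem ker_sub_smul_vecMulVec_of_eq (hM : Mᵀ = M) (hx : M *ᵥ x = y)
    (ht : t * (x ⬝ᵥ y) = 1) :
    LinearMap.ker (M - t • vecMulVec y y).mulVecLin = LinearMap.ker M.mulVecLin ⊔ K ∙ x := by
  refine le_antisymm (fun v hv => ?_)
    (sup_le (ker_mulVecLin_le_ker_sub_smul_vecMulVec hM hx) ?_)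
  · rw [LinearMap.mem_ker, mulVecLin_apply, sub_smul_vecMulVec_mulVec] at hv
    rw [← sub_add_cancel v ((t * (y ⬝ᵥ v)) • x)]
    refine Submodule.add_mem_sup ?_
      (Submodule.smul_mem _ _ (Submodule.mem_span_singleton_self x))
    rwa [LinearMap.mem_ker, mulVecLin_apply, mulVec_sub, mulVec_smul, hx]
  · rw [Submodule.span_singleton_le_iff_mem, LinearMap.mem_ker, mulVecLin_apply,
      sub_smul_vecMulVec_mulVec, hx, dotProduct_comm, ht, one_smul, sub_self]

theorem rank_sub_smul_vecMulVec_of_ne (hM : Mᵀ = M) (hx : M *ᵥ x = y)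
    (ht : t * (x ⬝ᵥ y) ≠ 1) : (M - t • vecMulVec y y).rank = M.rank := by
  have h₁ := (M - t • vecMulVec y y).rank_add_finrank_ker
  have h₂ := M.rank_add_finrank_ker
  rw [ker_sub_smul_vecMulVec_of_ne hM hx ht] at h₁
  omega

theorem rank_sub_smul_vecMulVec_add_one_of_eq (hM : Mᵀ = M) (hx : M *ᵥ x = y)
    (ht : t * (x ⬝ᵥ y) = 1) : (M - t • vecMulVec y y).rank + 1 = M.rank := by
  have hx₀ : x ≠ 0 := by rintro rfl; simp at ht
  have hxM : x ∉ LinearMap.ker M.mulVecLin := by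
    rintro hxM
    rw [LinearMap.mem_ker, mulVecLin_apply, hx] at hxM
    simp [hxM] at ht
  have hdisj := (Submodule.disjoint_span_singleton' hx₀).mpr hxM
  have h₁ := (M - t • vecMulVec y y).rank_add_finrank_ker
  have h₂ := M.rank_add_finrank_ker
  have h₃ := Submodule.finrank_sup_add_finrank_inf_eq (LinearMap.ker M.mulVecLin) (K ∙ x)
  rw [hdisj.eq_bot, finrank_bot, add_zero, finrank_span_singleton hx₀] at h₃
  rw [ker_sub_smul_vecMulVec_of_eq hM hx ht] at h₁
  omega

theorem rank_sub_smul_vecMulVec [DecidableEq K] (hM : Mᵀ = M) (hx : M *ᵥ x = y) :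
    ((M - t • vecMulVec y y).rank : ℤ) =
      if t * (x ⬝ᵥ y) = 1 then (M.rank : ℤ) - 1 else (M.rank : ℤ) := by
  split_ifs with ht
  · have := rank_sub_smul_vecMulVec_add_one_of_eq hM hx ht
    omega
  · rw [rank_sub_smul_vecMulVec_of_ne hM hx ht]

end Field

section Gram

open scoped ComplexOrder

variable {𝕜 E ι : Type*} [RCLike 𝕜] [NormedAddCommGroup E] [InnerProductSpace 𝕜 E] [Fintype ι]

theorem rank_gram_s2 [FiniteDimensional 𝕜 E] (v : ι → E) :
    (gram 𝕜 v).rank = Module.finrank 𝕜 (Submodule.span 𝕜 (Set.range v)) := by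
  let b := stdOrthonormalBasis 𝕜 E
  let e : E ≃ₗ[𝕜] (Fin (Module.finrank 𝕜 E) → 𝕜) :=
    b.repr.toLinearEquiv.trans (WithLp.linearEquiv 2 𝕜 _)
  have hcol : (of fun i j => (b.repr (v j)).ofLp i).col = e ∘ v := rfl
  rw [gram_eq_conjTranspose_mul b, rank_conjTranspose_mul_self, rank_eq_finrank_span_cols,
    hcol, Set.range_comp, ← e.coe_toLinearMap, Submodule.span_image, e.finrank_map_eq]

theorem exists_euclideanSpace_gram_eq {r : ℕ} {v : ι → E}
    (hv : Module.finrank 𝕜 (Submodule.span 𝕜 (Set.range v)) = r) :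
    ∃ u : ι → EuclideanSpace 𝕜 (Fin r), gram 𝕜 u = gram 𝕜 v := by
  have := FiniteDimensional.span_of_finite 𝕜 (Set.finite_range v)
  let L := ((stdOrthonormalBasis 𝕜 (Submodule.span 𝕜 (Set.range v))).reindex
    (finCongr hv)).repr
  refine ⟨fun i => L ⟨v i, Submodule.subset_span (Set.mem_range_self i)⟩, ?_⟩
  ext i j
  simp only [gram_apply, LinearIsometryEquiv.inner_map_map, Submodule.coe_inner]

open scoped MatrixOrder in
theorem PosSemidef.exists_gram_eq [DecidableEq ι] {H : Matrix ι ι 𝕜} (hH : H.PosSemidef) :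
    ∃ v : ι → EuclideanSpace 𝕜 ι, gram 𝕜 v = H := by
  obtain ⟨B, rfl⟩ := CStarAlgebra.nonneg_iff_eq_star_mul_self.mp hH.nonneg
  refine ⟨fun j => WithLp.toLp 2 (B.col j), ?_⟩
  rw [gram_eq_conjTranspose_mul (EuclideanSpace.basisFun ι 𝕜), star_eq_conjTranspose]
  simp only [EuclideanSpace.basisFun_repr, col_apply]
  rfl

theorem PosSemidef.exists_euclideanSpace_gram_eq [DecidableEq ι] {H : Matrix ι ι 𝕜} {r : ℕ}
    (hH : H.PosSemidef) (hr : H.rank = r) :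
    ∃ u : ι → EuclideanSpace 𝕜 (Fin r), gram 𝕜 u = H := by
  obtain ⟨v, rfl⟩ := hH.exists_gram_eq
  exact Matrix.exists_euclideanSpace_gram_eq ((rank_gram_s2 v).symm.trans hr)

end Gram

section Real

variable {n : Type*} [Fintype n] [DecidableEq n] {M : Matrix n n ℝ}

theorem PosSemidef.dotProduct_mulVec_sq_le (hM : M.PosSemidef) (x v : n → ℝ) :
    (x ⬝ᵥ M *ᵥ v) ^ 2 ≤ (x ⬝ᵥ M *ᵥ x) * (v ⬝ᵥ M *ᵥ v) := by
  obtain ⟨w, rfl⟩ := hM.exists_gram_eq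
  have h := real_inner_mul_inner_self_le (∑ i, x i • w i) (∑ i, v i • w i)
  simp only [← star_dotProduct_gram_mulVec, star_trivial] at h
  rwa [sq]

theorem PosSemidef.sub_smul_vecMulVec {x y : n → ℝ} {t : ℝ} (hM : M.PosSemidef)
    (hx : M *ᵥ x = y) (ht₀ : 0 ≤ t) (ht : t * (x ⬝ᵥ y) ≤ 1) :
    (M - t • vecMulVec y y).PosSemidef := by
  have hJ : (vecMulVec y y).IsHermitian := by
    simpa using (posSemidef_vecMulVec_self_star y).1
  refine .of_dotProduct_mulVec_nonneg (hM.1.sub (hJ.smul (.all t))) fun v => ?_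
  have hsym : Mᵀ = M := hM.1
  have hCS := hM.dotProduct_mulVec_sq_le x v
  rw [← dotProduct_eq_dotProduct_mulVec_of_mulVec_eq hsym hx, hx] at hCS
  have hv := hM.dotProduct_mulVec_nonneg v
  rw [star_trivial] at hv ⊢
  rw [sub_smul_vecMulVec_mulVec, dotProduct_sub, dotProduct_smul, smul_eq_mul,
    dotProduct_comm v y]
  nlinarith [mul_le_mul_of_nonneg_left hCS ht₀, mul_le_mul_of_nonneg_right ht hv]

end Real

end Matrix

theorem SimpleGraph.smul_adjMatrix_add_smul_one_sub_apply {V : Type*} [DecidableEq V]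
    (G : SimpleGraph V) [DecidableRel G.Adj] {α β : ℝ} (hαβ : α ≠ β) (i k : V) :
    ((α - β) • (G.adjMatrix ℝ + ((1 - β) / (α - β)) • 1 -
      ((α - β) / -β)⁻¹ • vecMulVec (fun _ => 1) fun _ => 1) : Matrix V V ℝ) i k =
      if i = k then 1 else if G.Adj i k then α else β := by
  have hαβ' : α - β ≠ 0 := sub_ne_zero.2 hαβ
  simp only [Matrix.smul_apply, Matrix.sub_apply, Matrix.add_apply, vecMulVec_apply,
    SimpleGraph.adjMatrix_apply, one_apply, smul_eq_mul, mul_one, inv_div, mul_sub, mul_add]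
  split_ifs with hadj hik hik
  · exact absurd hadj (hik ▸ G.loopless.irrefl i)
  all_goals field_simp
  all_goals ring

theorem stmt2_general (n : ℕ)
    (α β μ : ℝ) (hβα : β < α) (hβ₀ : β < 0)
    (hμ : μ = (1 - β) / (α - β))
    (G : SimpleGraph (Fin n)) [DecidableRel G.Adj]
    (M : Matrix (Fin n) (Fin n) ℝ)
    (hM : M = G.adjMatrix ℝ + μ • (1 : Matrix (Fin n) (Fin n) ℝ))
    (hpsd : M.PosSemidef)
    (hj : ∃ x : Fin n → ℝ, M *ᵥ x = fun _ => 1)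
    (hle : ∀ N : Matrix (Fin n) (Fin n) ℝ, M * N * M = M →
      (fun _ => (1 : ℝ)) ⬝ᵥ (N *ᵥ fun _ => 1) ≤ (α - β) / (-β))
    (r : ℕ)
    (hr : ∀ N : Matrix (Fin n) (Fin n) ℝ, M * N * M = M →
      (r : ℤ) = if (fun _ => (1 : ℝ)) ⬝ᵥ (N *ᵥ fun _ => 1) = (α - β) / (-β)
        then (M.rank : ℤ) - 1 else (M.rank : ℤ)) :
    ∃ u : Fin n → EuclideanSpace ℝ (Fin r),
      (∀ i, ‖u i‖ = 1) ∧
      Module.finrank ℝ (Submodule.span ℝ (Set.range u)) = r ∧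
      ∀ i j, i ≠ j → rinner (u i) (u j) = if G.Adj i j then α else β := by
  obtain ⟨x, hx⟩ := hj
  obtain ⟨N, hN⟩ := M.exists_mul_mul_eq_self
  have hsym : Mᵀ = M := hpsd.1
  have hNj := dotProduct_mulVec_of_mul_mul_eq_self hsym hx hN
  have hαβ : 0 < α - β := sub_pos.2 hβα
  have hc : 0 < (α - β) / -β := div_pos hαβ (neg_pos.2 hβ₀)
  have hK := hpsd.sub_smul_vecMulVec hx (inv_nonneg.2 hc.le)
    ((inv_mul_le_one₀ hc).2 (hNj ▸ hle N hN))
  have hKr := rank_sub_smul_vecMulVec (t := ((α - β) / -β)⁻¹) hsym hx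
  simp only [inv_mul_eq_one₀ hc.ne', eq_comm (a := (α - β) / -β), ← hNj, ← hr N hN,
    Nat.cast_inj] at hKr
  have hHr := (rank_smul_of_mem_nonZeroDivisors _
    (mem_nonZeroDivisors_of_ne_zero hαβ.ne')).trans hKr
  obtain ⟨u, hu⟩ := (hK.smul hαβ.le).exists_euclideanSpace_gram_eq hHr
  have hinner (i k : Fin n) :
      inner ℝ (u i) (u k) = if i = k then 1 else if G.Adj i k then α else β := by
    rw [← gram_apply, hu, hM, hμ, G.smul_adjMatrix_add_smul_one_sub_apply hβα.ne']
  refine ⟨u, fun i => ?_, by rw [← rank_gram_s2, hu, hHr], fun i k hik => ?_⟩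
  · have h := hinner i i
    rw [if_pos rfl, real_inner_self_eq_norm_sq] at h
    exact (pow_eq_one_iff_of_nonneg (norm_nonneg _) two_ne_zero).1 h
  · rw [rinner, hinner, if_neg hik]

/-- converse construction. If an `n`-vertex graph `G` satisfies the spectral
conditions of Theorem 3.1, then there is a spherical `{α,β}`-code of size `n` and rank `r`
in `ℝ^r` whose associated `α`-graph is `G`. -/
theorem stmt2 (n : ℕ)
    (α β μ : ℝ) (hβ₁ : -1 ≤ β) (hβα : β < α) (hα : α < 1) (hβ₀ : β < 0)
    (hμ : μ = (1 - β) / (α - β))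
    (G : SimpleGraph (Fin n)) [DecidableRel G.Adj]
    (M : Matrix (Fin n) (Fin n) ℝ)
    (hM : M = G.adjMatrix ℝ + μ • (1 : Matrix (Fin n) (Fin n) ℝ))
    (hpsd : M.PosSemidef)
    (hj : ∃ x : Fin n → ℝ, M *ᵥ x = fun _ => 1)
    (hle : ∀ N : Matrix (Fin n) (Fin n) ℝ, M * N * M = M →
      (fun _ => (1 : ℝ)) ⬝ᵥ (N *ᵥ fun _ => 1) ≤ (α - β) / (-β))
    (r : ℕ)
    (hr : ∀ N : Matrix (Fin n) (Fin n) ℝ, M * N * M = M →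
      (r : ℤ) = if (fun _ => (1 : ℝ)) ⬝ᵥ (N *ᵥ fun _ => 1) = (α - β) / (-β)
        then (M.rank : ℤ) - 1 else (M.rank : ℤ)) :
    ∃ u : Fin n → EuclideanSpace ℝ (Fin r),
      (∀ i, ‖u i‖ = 1) ∧
      Module.finrank ℝ (Submodule.span ℝ (Set.range u)) = r ∧
      ∀ i j, i ≠ j → rinner (u i) (u j) = if G.Adj i j then α else β :=
  stmt2_general n α β μ hβα hβ₀ hμ G M hM hpsd hj hle r hr
end
end

section
/- Let -1 ≤ β < α < 1 with β < 0, and set μ = (1-β)/(α-β). Let G be the associated α-graph of a spherical {α,β}-code, with adjacency matrix A_G. Then for any induced subgraph H of G on t vertices and any {1}-inverse N of A_G + μI, one has t² ≤ (2|E(H)| + tμ)·(jᵀNj) ≤ ((α-β)/(-β))·(2|E(H)| + tμ), where |E(H)| is the number of edges of H. -/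
open Matrix

noncomputable section

open scoped Classical

/-!
With `B = A_G + μI` and `J` the all-ones matrix, the Gram matrix of the code satisfies
`(α - β) B = Gram + (-β) J`. Hence `B` is positive semidefinite and its kernel is orthogonal to
`j`, so `j = B w` for some `w`, and `jᵀ N j = wᵀ B N B w = wᵀ B w =: c` for every `{1}`-inverse `N`.
Cauchy–Schwarz for the semi-inner product given by `B`, applied to `w` and the indicator `χ` of
the vertex set of `H`, gives `t² = (χᵀ B w)² ≤ (χᵀ B χ) c = (2|E(H)| + tμ) c`. Since `jᵀ w = c`,
the same identity gives `(α - β) c = wᵀ Gram w + (-β) c² ≥ (-β) c²`, that is `c ≤ (α - β)/(-β)`.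
-/

namespace Matrix
variable {ι : Type*} [Fintype ι]

theorem PosSemidef.sq_dotProduct_mulVec_le {M : Matrix ι ι ℝ} (hM : M.PosSemidef)
    (x y : ι → ℝ) : (x ⬝ᵥ M *ᵥ y) ^ 2 ≤ (x ⬝ᵥ M *ᵥ x) * (y ⬝ᵥ M *ᵥ y) := by
  let _ := M.toSeminormedAddCommGroup hM
  let _ := M.toInnerProductSpace hM
  have hinner (a b : ι → ℝ) : (inner ℝ a b : ℝ) = a ⬝ᵥ M *ᵥ b := by
    change M *ᵥ b ⬝ᵥ star a = _
    rw [star_trivial, dotProduct_comm]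
  simpa only [hinner, sq] using real_inner_mul_inner_self_le x y

theorem IsHermitian.exists_mulVec_eq [DecidableEq ι] {M : Matrix ι ι ℝ} (hM : M.IsHermitian)
    {v : ι → ℝ} (hv : ∀ x, M *ᵥ x = 0 → v ⬝ᵥ x = 0) : ∃ w, M *ᵥ w = v := by
  have hv' : WithLp.toLp 2 v ∈ (LinearMap.ker M.toEuclideanLin)ᗮ := by
    refine (Submodule.mem_orthogonal _ _).mpr fun x hx => ?_
    rw [EuclideanSpace.inner_eq_star_dotProduct, star_trivial]
    exact hv _ (congrArg WithLp.ofLp hx)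
  rw [← (isSymmetric_toEuclideanLin_iff.mpr hM).orthogonal_range,
    Submodule.orthogonal_orthogonal] at hv'
  obtain ⟨w, hw⟩ := hv'
  exact ⟨w, congrArg WithLp.ofLp hw⟩

theorem IsSymm.dotProduct_mulVec_mulVec_of_mul_mul_eq {R : Type*} [CommSemiring R]
    {M N : Matrix ι ι R} (hM : M.IsSymm) (hN : M * N * M = M) (w : ι → R) :
    M *ᵥ w ⬝ᵥ N *ᵥ (M *ᵥ w) = w ⬝ᵥ M *ᵥ w := by
  calc M *ᵥ w ⬝ᵥ N *ᵥ (M *ᵥ w) = w ⬝ᵥ (M * N * M) *ᵥ w := by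
        rw [← mulVec_mulVec, ← mulVec_mulVec, dotProduct_mulVec w M, ← mulVec_transpose, hM.eq]
    _ = w ⬝ᵥ M *ᵥ w := by rw [hN]

theorem dotProduct_indicator_one {R : Type*} [NonAssocSemiring R] (v : ι → R) (s : Finset ι) :
    v ⬝ᵥ (s : Set ι).indicator 1 = ∑ i ∈ s, v i := by
  simp [dotProduct, Set.indicator_apply, Finset.sum_ite_mem]

theorem indicator_dotProduct_mulVec_indicator {R : Type*} [CommSemiring R]
    (M : Matrix ι ι R) (s : Finset ι) :
    (s : Set ι).indicator 1 ⬝ᵥ M *ᵥ (s : Set ι).indicator 1 = ∑ i ∈ s, ∑ j ∈ s, M i j := by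
  rw [dotProduct_comm, dotProduct_indicator_one]
  exact Finset.sum_congr rfl fun i _ => dotProduct_indicator_one (M i) s

end Matrix

theorem SimpleGraph.sum_sum_adjMatrix_eq_two_mul_card_edgeFinset_induce {V : Type*} [Fintype V]
    (G : SimpleGraph V) (R : Type*) [NonAssocSemiring R] (s : Finset V) :
    ∑ i ∈ s, ∑ j ∈ s, G.adjMatrix R i j = 2 * ((G.induce (s : Set V)).edgeFinset.card : R) := by
  have hsub : (G.induce (s : Set V)).adjMatrix R = (G.adjMatrix R).submatrix (↑) (↑) := by
    ext; simp [adjMatrix_apply]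
  calc ∑ i ∈ s, ∑ j ∈ s, G.adjMatrix R i j
      = (G.induce (s : Set V)).adjMatrix R *ᵥ 1 ⬝ᵥ 1 := by
        simp only [hsub, dotProduct, mulVec, submatrix_apply, Pi.one_apply, mul_one]
        rw [← Finset.sum_finset_coe]
        exact Finset.sum_congr rfl fun i _ => (Finset.sum_finset_coe _ s).symm
    _ = 2 * ((G.induce (s : Set V)).edgeFinset.card : R) := by
        rw [← natCast_card_dart_eq_dotProduct, dart_card_eq_twice_card_edges]
        push_cast; rfl

section SphericalCode

variable {d n : ℕ} {α β μ : ℝ} {u : Fin n → EuclideanSpace ℝ (Fin d)}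

theorem alphaAdj_eq_adjMatrix (α : ℝ) (u : Fin n → EuclideanSpace ℝ (Fin d)) :
    alphaAdj α u = (alphaGraph α u).adjMatrix ℝ := by
  ext i j
  rw [SimpleGraph.adjMatrix_apply]
  exact if_congr Iff.rfl rfl rfl

theorem smul_alphaAdj_add_smul_one (hu : IsSphericalCode α β u) (hβα : β < α)
    (hμ : μ = (1 - β) / (α - β)) :
    (α - β) • (alphaAdj α u + μ • 1) = gram ℝ u + (-β) • vecMulVec 1 1 := by
  ext i j
  rw [Matrix.add_apply, show gram ℝ u i j = rinner (u i) (u j) from rfl]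
  rcases eq_or_ne i j with rfl | hij
  · have hii : rinner (u i) (u i) = 1 := by
      rw [rinner, real_inner_self_eq_norm_sq, hu.1 i, one_pow]
    simp [alphaAdj, hii, hμ, mul_div_cancel₀ _ (sub_ne_zero.mpr hβα.ne')]
    ring
  · rcases hu.2 i j hij with h | h
    · simp [alphaAdj, hij, h, sub_eq_add_neg]
    · simp [alphaAdj, hij, h, hβα.ne]

theorem sub_mul_dotProduct_alphaAdj_add_smul_one_mulVec (hu : IsSphericalCode α β u)
    (hβα : β < α) (hμ : μ = (1 - β) / (α - β)) (x : Fin n → ℝ) :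
    (α - β) * (x ⬝ᵥ (alphaAdj α u + μ • 1) *ᵥ x) = x ⬝ᵥ gram ℝ u *ᵥ x + -β * (1 ⬝ᵥ x) ^ 2 := by
  rw [← smul_eq_mul, ← dotProduct_smul, ← smul_mulVec, smul_alphaAdj_add_smul_one hu hβα hμ,
    add_mulVec, dotProduct_add, smul_mulVec, dotProduct_smul, vecMulVec_mulVec]
  simp [sq, dotProduct_comm x 1]

theorem posSemidef_alphaAdj_add_smul_one (hu : IsSphericalCode α β u) (hβα : β < α)
    (hβ₀ : β ≤ 0) (hμ : μ = (1 - β) / (α - β)) : (alphaAdj α u + μ • 1).PosSemidef := by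
  have h : ((α - β) • (alphaAdj α u + μ • 1)).PosSemidef := by
    rw [smul_alphaAdj_add_smul_one hu hβα hμ]
    simpa using (posSemidef_gram ℝ u).add
      ((posSemidef_vecMulVec_self_star (1 : Fin n → ℝ)).smul (neg_nonneg.mpr hβ₀))
  have h' := h.smul (inv_nonneg.mpr (sub_nonneg.mpr hβα.le))
  rwa [smul_smul, inv_mul_cancel₀ (sub_ne_zero.mpr hβα.ne'), one_smul] at h'

theorem exists_alphaAdj_add_smul_one_mulVec_eq_one (hu : IsSphericalCode α β u) (hβα : β < α)
    (hβ₀ : β < 0) (hμ : μ = (1 - β) / (α - β)) :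
    ∃ w, (alphaAdj α u + μ • 1) *ᵥ w = 1 := by
  refine (posSemidef_alphaAdj_add_smul_one hu hβα hβ₀.le hμ).isHermitian.exists_mulVec_eq
    fun x hx => ?_
  have h := sub_mul_dotProduct_alphaAdj_add_smul_one_mulVec hu hβα hμ x
  rw [hx, dotProduct_zero, mul_zero] at h
  have hG : 0 ≤ x ⬝ᵥ gram ℝ u *ᵥ x := by
    simpa using (posSemidef_gram ℝ u).dotProduct_mulVec_nonneg x
  have hsq : (1 ⬝ᵥ x) ^ 2 = 0 := by nlinarith [sq_nonneg (1 ⬝ᵥ x)]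
  exact pow_eq_zero_iff two_ne_zero |>.mp hsq

theorem neg_mul_dotProduct_alphaAdj_add_smul_one_mulVec_le (hu : IsSphericalCode α β u)
    (hβα : β < α) (hβ₀ : β ≤ 0) (hμ : μ = (1 - β) / (α - β)) {w : Fin n → ℝ}
    (hw : (alphaAdj α u + μ • 1) *ᵥ w = 1) :
    -β * (w ⬝ᵥ (alphaAdj α u + μ • 1) *ᵥ w) ≤ α - β := by
  set c := w ⬝ᵥ (alphaAdj α u + μ • 1) *ᵥ w
  have hc : 0 ≤ c := by
    simpa using (posSemidef_alphaAdj_add_smul_one hu hβα hβ₀ hμ).dotProduct_mulVec_nonneg w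
  have hsum : 1 ⬝ᵥ w = c := by rw [← hw, dotProduct_comm]
  have h := sub_mul_dotProduct_alphaAdj_add_smul_one_mulVec hu hβα hμ w
  rw [hsum] at h
  have hG : 0 ≤ w ⬝ᵥ gram ℝ u *ᵥ w := by
    simpa using (posSemidef_gram ℝ u).dotProduct_mulVec_nonneg w
  rcases hc.eq_or_lt with hc0 | hcpos
  · rw [← hc0, mul_zero]
    linarith
  · exact le_of_mul_le_mul_right (by nlinarith) hcpos

theorem indicator_dotProduct_alphaAdj_add_smul_one_mulVec_indicator (s : Finset (Fin n)) :
    (s : Set (Fin n)).indicator 1 ⬝ᵥ (alphaAdj α u + μ • 1) *ᵥ (s : Set (Fin n)).indicator 1 =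
      2 * ((alphaGraph α u).induce (s : Set (Fin n))).edgeFinset.card + s.card * μ := by
  rw [indicator_dotProduct_mulVec_indicator]
  simp only [Matrix.add_apply, Finset.sum_add_distrib, alphaAdj_eq_adjMatrix,
    SimpleGraph.sum_sum_adjMatrix_eq_two_mul_card_edgeFinset_induce]
  simp [one_apply]

end SphericalCode

theorem stmt3_general (d n : ℕ)
    (α β μ : ℝ) (hβα : β < α) (hβ₀ : β < 0)
    (hμ : μ = (1 - β) / (α - β))
    (u : Fin n → EuclideanSpace ℝ (Fin d)) (hu : IsSphericalCode α β u)
    (s : Finset (Fin n)) (t : ℕ) (ht : t = s.card)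
    (e : ℕ) (he : e = ((alphaGraph α u).induce (↑s : Set (Fin n))).edgeFinset.card)
    (N : Matrix (Fin n) (Fin n) ℝ)
    (hN : (alphaAdj α u + μ • (1 : Matrix (Fin n) (Fin n) ℝ)) * N *
        (alphaAdj α u + μ • 1) = alphaAdj α u + μ • 1) :
    (t : ℝ) ^ 2 ≤ (2 * e + t * μ) * ((fun _ => (1 : ℝ)) ⬝ᵥ (N *ᵥ fun _ => 1)) ∧
    (2 * e + t * μ) * ((fun _ => (1 : ℝ)) ⬝ᵥ (N *ᵥ fun _ => 1)) ≤
      (α - β) / (-β) * (2 * e + t * μ) := by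
  obtain ⟨w, hw⟩ := exists_alphaAdj_add_smul_one_mulVec_eq_one hu hβα hβ₀ hμ
  set B := alphaAdj α u + μ • (1 : Matrix (Fin n) (Fin n) ℝ)
  have hB : B.PosSemidef := posSemidef_alphaAdj_add_smul_one hu hβα hβ₀.le hμ
  have hc : (fun _ => (1 : ℝ)) ⬝ᵥ (N *ᵥ fun _ => 1) = w ⬝ᵥ B *ᵥ w := by
    change 1 ⬝ᵥ N *ᵥ 1 = _
    rw [← hw]
    exact (isHermitian_iff_isSymm.mp hB.isHermitian).dotProduct_mulVec_mulVec_of_mul_mul_eq hN w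
  set χ := (s : Set (Fin n)).indicator (1 : Fin n → ℝ)
  have hχw : χ ⬝ᵥ B *ᵥ w = t := by
    rw [hw, dotProduct_comm, dotProduct_indicator_one]
    simp [ht]
  have hχ : χ ⬝ᵥ B *ᵥ χ = 2 * e + t * μ := by
    rw [indicator_dotProduct_alphaAdj_add_smul_one_mulVec_indicator, he, ht]
  have hμ₀ : 0 ≤ μ := hμ ▸ div_nonneg (by linarith) (by linarith)
  rw [hc]
  constructor
  · calc (t : ℝ) ^ 2 = (χ ⬝ᵥ B *ᵥ w) ^ 2 := by rw [hχw]
      _ ≤ (χ ⬝ᵥ B *ᵥ χ) * (w ⬝ᵥ B *ᵥ w) := hB.sq_dotProduct_mulVec_le χ w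
      _ = (2 * e + t * μ) * (w ⬝ᵥ B *ᵥ w) := by rw [hχ]
  · have hc_le : w ⬝ᵥ B *ᵥ w ≤ (α - β) / (-β) :=
      (le_div_iff₀' (neg_pos.mpr hβ₀)).mpr
        (neg_mul_dotProduct_alphaAdj_add_smul_one_mulVec_le hu hβα hβ₀.le hμ hw)
    rw [mul_comm ((α - β) / (-β))]
    exact mul_le_mul_of_nonneg_left hc_le (by positivity)

/-- for the `α`-graph `G` of a spherical `{α,β}`-code and any induced
subgraph `H` on `t` vertices, `t² ≤ (2|E(H)| + tμ)·jᵀNj ≤ ((α-β)/(-β))·(2|E(H)| + tμ)`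
for any `{1}`-inverse `N` of `A_G + μI`. -/
theorem stmt3 (d n : ℕ)
    (α β μ : ℝ) (hβ₁ : -1 ≤ β) (hβα : β < α) (hα : α < 1) (hβ₀ : β < 0)
    (hμ : μ = (1 - β) / (α - β))
    (u : Fin n → EuclideanSpace ℝ (Fin d)) (hu : IsSphericalCode α β u)
    (s : Finset (Fin n)) (t : ℕ) (ht : t = s.card)
    (e : ℕ) (he : e = ((alphaGraph α u).induce (↑s : Set (Fin n))).edgeFinset.card)
    (N : Matrix (Fin n) (Fin n) ℝ)
    (hN : (alphaAdj α u + μ • (1 : Matrix (Fin n) (Fin n) ℝ)) * N *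
        (alphaAdj α u + μ • 1) = alphaAdj α u + μ • 1) :
    (t : ℝ) ^ 2 ≤ (2 * e + t * μ) * ((fun _ => (1 : ℝ)) ⬝ᵥ (N *ᵥ fun _ => 1)) ∧
    (2 * e + t * μ) * ((fun _ => (1 : ℝ)) ⬝ᵥ (N *ᵥ fun _ => 1)) ≤
      (α - β) / (-β) * (2 * e + t * μ) :=
  stmt3_general d n α β μ hβα hβ₀ hμ u hu s t ht e he N hN
end
end

section
/- Let -1 ≤ β < α < 1 with β < 0. Let G be the associated α-graph of a spherical {α,β}-code of rank r. If G is not the complete graph K_{r+1}, then G contains no complete subgraph on r+1 vertices (G is K_{r+1}-free). -/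
/-!
A clique of size `r + 1` in a code of rank `r` is a linearly dependent family of unit vectors
with Gram matrix `(1 - α) I + α J`. Pairing a linear relation with each clique vector shows that
its coefficients are all equal, so the clique vectors sum to zero; pairing that sum with a clique
vector gives `1 + α r = 0`, hence `α < 0`. A vector outside the clique would have negative inner
product (`α` or `β`) with every clique vector, contradicting the vanishing sum. So the clique is
the whole code and the graph is `K_{r+1}`.
-/

open Matrix

noncomputable section

open scoped RealInnerProductSpace

section PairwiseEqualInner

variable {E ι : Type*} [NormedAddCommGroup E] [InnerProductSpace ℝ E] [Fintype ι]
  {v : ι → E} {α : ℝ}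

theorem inner_sum_smul_of_pairwise_inner_eq (hv : ∀ i, ⟪v i, v i⟫ = 1)
    (hα : Pairwise fun i j => ⟪v i, v j⟫ = α) (g : ι → ℝ) (j : ι) :
    ⟪v j, ∑ i, g i • v i⟫ = (1 - α) * g j + α * ∑ i, g i := by
  classical
  have hterm : ∀ i, ⟪v j, g i • v i⟫ = α * g i + if i = j then (1 - α) * g j else 0 := by
    intro i
    rw [real_inner_smul_right]
    rcases eq_or_ne i j with rfl | hij
    · simp only [hv, if_true]
      ring
    · simp [hα hij.symm, hij, mul_comm]
  simp only [inner_sum, hterm, Finset.sum_add_distrib, Finset.sum_ite_eq', Finset.mem_univ,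
    if_true, ← Finset.mul_sum]
  ring

theorem inner_sum_of_pairwise_inner_eq (hv : ∀ i, ⟪v i, v i⟫ = 1)
    (hα : Pairwise fun i j => ⟪v i, v j⟫ = α) (j : ι) :
    ⟪v j, ∑ i, v i⟫ = 1 - α + α * Fintype.card ι := by
  simpa using inner_sum_smul_of_pairwise_inner_eq hv hα 1 j

theorem sum_eq_zero_of_not_linearIndependent (hv : ∀ i, ⟪v i, v i⟫ = 1)
    (hα : Pairwise fun i j => ⟪v i, v j⟫ = α) (hα₁ : α ≠ 1)
    (hdep : ¬ LinearIndependent ℝ v) : ∑ i, v i = 0 := by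
  obtain ⟨g, hg, i₀, hi₀⟩ := Fintype.not_linearIndependent_iff.mp hdep
  have hrel : ∀ j, (1 - α) * g j + α * ∑ i, g i = 0 := fun j => by
    rw [← inner_sum_smul_of_pairwise_inner_eq hv hα, hg, inner_zero_right]
  have hconst : ∀ i, g i = g i₀ := fun i =>
    mul_left_cancel₀ (sub_ne_zero.mpr hα₁.symm) (by linarith [hrel i, hrel i₀])
  have hsmul : g i₀ • ∑ i, v i = 0 := by
    rw [Finset.smul_sum, ← hg]
    exact Finset.sum_congr rfl fun i _ => by rw [hconst i]
  exact (smul_eq_zero.mp hsmul).resolve_left hi₀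

end PairwiseEqualInner

theorem Finset.card_le_finrank_span_of_linearIndependent {K V ι : Type*} [DivisionRing K]
    [AddCommGroup V] [Module K V] [Finite ι] (u : ι → V) (s : Finset ι)
    (hs : LinearIndependent K fun i : s => u i) :
    s.card ≤ Module.finrank K (Submodule.span K (Set.range u)) := by
  have := FiniteDimensional.span_of_finite K (Set.finite_range u)
  rw [← Fintype.card_coe s, ← finrank_span_eq_card hs]
  exact Submodule.finrank_mono (Submodule.span_mono (Set.range_comp_subset_range _ u))

theorem IsSphericalCode.mem_of_sum_eq_zero {α β : ℝ} {d n : ℕ}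
    {u : Fin n → EuclideanSpace ℝ (Fin d)} (hu : IsSphericalCode α β u) (hα : α < 0)
    (hβ : β < 0) {s : Finset (Fin n)} (hs : s.Nonempty) (hsum : ∑ i ∈ s, u i = 0)
    (k : Fin n) : k ∈ s := by
  by_contra hk
  have hneg : ⟪u k, ∑ i ∈ s, u i⟫ < 0 := by
    rw [inner_sum]
    refine Finset.sum_neg (fun i hi => ?_) hs
    rcases hu.2 k i (ne_of_mem_of_not_mem hi hk).symm with h | h <;>
      rw [rinner] at h <;> rw [h] <;> assumption
  simp [hsum] at hneg

theorem SimpleGraph.nonempty_iso_top_fin {V : Type*} [Fintype V] {G : SimpleGraph V}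
    (hG : G = ⊤) : Nonempty (G ≃g (⊤ : SimpleGraph (Fin (Fintype.card V)))) :=
  ⟨hG ▸ SimpleGraph.Iso.completeGraph (Fintype.equivFin V)⟩

theorem stmt5_general (d n : ℕ)
    (α β : ℝ) (hα : α < 1) (hβ₀ : β < 0)
    (u : Fin n → EuclideanSpace ℝ (Fin d)) (hu : IsSphericalCode α β u)
    (r : ℕ) (hr : r = Module.finrank ℝ (Submodule.span ℝ (Set.range u)))
    (hG : ¬ Nonempty ((alphaGraph α u) ≃g (⊤ : SimpleGraph (Fin (r + 1))))) :
    (alphaGraph α u).CliqueFree (r + 1) := by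
  rintro s ⟨hclique, hcard⟩
  have hunit : ∀ i, ⟪u i, u i⟫ = 1 := fun i => by
    rw [real_inner_self_eq_norm_sq, hu.1 i, one_pow]
  have hpair : Pairwise fun i j : s => ⟪u i, u j⟫ = α := fun i j hij =>
    (hclique i.2 j.2 (Subtype.coe_ne_coe.mpr hij)).2
  have hdep : ¬ LinearIndependent ℝ fun i : s => u i := fun h => by
    have := s.card_le_finrank_span_of_linearIndependent u h
    omega
  have hsum : ∑ i ∈ s, u i = 0 := by
    rw [← Finset.sum_coe_sort]
    exact sum_eq_zero_of_not_linearIndependent (fun i : s => hunit i) hpair hα.ne hdep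
  obtain ⟨i₀, hi₀⟩ : s.Nonempty := Finset.card_pos.mp (by omega)
  have hαr : 1 + α * r = 0 := by
    have := inner_sum_of_pairwise_inner_eq (fun i : s => hunit i) hpair ⟨i₀, hi₀⟩
    rw [Finset.sum_coe_sort s u, hsum, inner_zero_right, Fintype.card_coe, hcard] at this
    push_cast at this
    linarith
  have hα₀ : α < 0 := by nlinarith [(Nat.cast_nonneg r : (0 : ℝ) ≤ r)]
  have hs : s = Finset.univ :=
    Finset.eq_univ_of_forall (hu.mem_of_sum_eq_zero hα₀ hβ₀ ⟨i₀, hi₀⟩ hsum)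
  have htop : alphaGraph α u = ⊤ :=
    SimpleGraph.isClique_univ.mp (by simpa [hs] using hclique)
  have hn : Fintype.card (Fin n) = r + 1 := by rw [← hcard, hs, Finset.card_univ]
  exact hG (hn ▸ SimpleGraph.nonempty_iso_top_fin htop)

/-- if `G` is the `α`-graph of a spherical `{α,β}`-code of rank `r` and `G`
is not (isomorphic to) the complete graph `K_{r+1}`, then `G` is `K_{r+1}`-free. -/
theorem stmt5 (d n : ℕ)
    (α β : ℝ) (hβ₁ : -1 ≤ β) (hβα : β < α) (hα : α < 1) (hβ₀ : β < 0)
    (u : Fin n → EuclideanSpace ℝ (Fin d)) (hu : IsSphericalCode α β u)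
    (r : ℕ) (hr : r = Module.finrank ℝ (Submodule.span ℝ (Set.range u)))
    (hG : ¬ Nonempty ((alphaGraph α u) ≃g (⊤ : SimpleGraph (Fin (r + 1))))) :
    (alphaGraph α u).CliqueFree (r + 1) :=
  stmt5_general d n α β hα hβ₀ u hu r hr hG
end
end

section
/- Let -1 ≤ β < α < 1 with β < 0, and set μ = (1-β)/(α-β). Let G be the associated α-graph of a spherical {α,β}-code, with adjacency matrix A_G. For any vertex u of G, let G_u be the subgraph of G induced by the open neighborhood N_G(u) of u. Then the all-ones vector j lies in the column space of A_{G_u} + μI, for every {1}-inverse N of A_{G_u} + μI one has jᵀNj ≤ (α-β)/(α²-β), and rank(A_{G_u} + μI) ≤ rank(A_G + μI) - 1. -/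
open Matrix

noncomputable section

/-!
On the neighbourhood `S` of `v` one has `(α - β) M = Gram(u|_S) - β J`, so
`(α - β) xᵀ M x = ‖∑ xᵢ uᵢ‖² - β (∑ xᵢ)²`. Since `β < 0`, every `y ∈ ker M` has `∑ yᵢ = 0`, and
as `M` is symmetric this puts `j` in its range. If `M x = j`, every `{1}`-inverse `N` gives
`jᵀ N j = jᵀ x =: s`. All of `S` has inner product `α` with the unit vector `u_v`, so
Cauchy–Schwarz gives `α² s² ≤ ‖∑ xᵢ uᵢ‖² = (α - β) s + β s²`, whence `s ≤ (α - β)/(α² - β) < μ`.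
Finally the principal submatrix of `A_G + μ I` on `{v} ∪ S` is `M` bordered by `j` and `μ`;
because `s ≠ μ`, restriction to `S` embeds its kernel into `ker M`, so its rank exceeds `rank M`.
-/

open scoped Classical
open scoped InnerProductSpace

namespace Matrix

variable {ι : Type*} [Fintype ι]

theorem IsHermitian.exists_mulVec_eq_of_forall_mulVec_eq_zero {𝕜 : Type*} [RCLike 𝕜]
    [DecidableEq ι] {A : Matrix ι ι 𝕜} (hA : A.IsHermitian) {b : ι → 𝕜}
    (hb : ∀ y, A *ᵥ y = 0 → star b ⬝ᵥ y = 0) : ∃ x, A *ᵥ x = b := by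
  have hrange : LinearMap.range A.toEuclideanLin = (LinearMap.ker A.toEuclideanLin)ᗮ := by
    rw [← (isSymmetric_toEuclideanLin_iff.mpr hA).orthogonal_range,
      Submodule.orthogonal_orthogonal]
  have hb' : WithLp.toLp 2 b ∈ (LinearMap.ker A.toEuclideanLin)ᗮ := by
    refine (Submodule.mem_orthogonal' _ _).2 fun y hy => ?_
    rw [EuclideanSpace.inner_eq_star_dotProduct, dotProduct_comm]
    exact hb y.ofLp (congrArg WithLp.ofLp hy)
  obtain ⟨x, hx⟩ := hrange ▸ hb'
  exact ⟨x.ofLp, congrArg WithLp.ofLp hx⟩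

theorem IsSymm.mulVec_dotProduct {R : Type*} [CommSemiring R] {A : Matrix ι ι R}
    (hA : A.IsSymm) (x y : ι → R) : A *ᵥ x ⬝ᵥ y = x ⬝ᵥ A *ᵥ y := by
  conv_rhs => rw [← hA.eq]
  rw [dotProduct_transpose_mulVec, dotProduct_comm]

theorem IsSymm.dotProduct_mulVec_eq_of_mul_mul_self {R : Type*} [CommSemiring R]
    {A N : Matrix ι ι R} (hA : A.IsSymm) (hN : A * N * A = A) {x b : ι → R}
    (hx : A *ᵥ x = b) : b ⬝ᵥ N *ᵥ b = x ⬝ᵥ b := by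
  subst hx
  rw [hA.mulVec_dotProduct, mulVec_mulVec, mulVec_mulVec, hN]

theorem rank_add_one_le_of_border {K : Type*} [Field K] {M : Matrix ι ι K} (hM : M.IsSymm)
    {B : Matrix (Option ι) (Option ι) K} {c x : ι → K} {μ : K}
    (hBM : ∀ i k, B (some i) (some k) = M i k) (hBc : ∀ i, B (some i) none = c i)
    (hBc' : ∀ k, B none (some k) = c k) (hBμ : B none none = μ)
    (hx : M *ᵥ x = c) (hμ : c ⬝ᵥ x ≠ μ) : M.rank + 1 ≤ B.rank := by
  have hker : ∀ z, B *ᵥ z = 0 → z none = 0 ∧ M *ᵥ (z ∘ some) = 0 := by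
    intro z hz
    have hrow : ∀ o, B o none * z none + ∑ k, B o (some k) * z (some k) = 0 := fun o => by
      simpa [mulVec, dotProduct, Fintype.sum_option] using congrFun hz o
    have hsome : M *ᵥ (z ∘ some) = -z none • c := by
      ext i
      have := hrow (some i)
      simp only [hBM, hBc] at this
      simp only [mulVec, dotProduct, Function.comp_apply, Pi.smul_apply, smul_eq_mul]
      linear_combination this
    have hnone : μ * z none + c ⬝ᵥ (z ∘ some) = 0 := by
      simpa [hBμ, hBc', dotProduct, mul_comm] using hrow none
    have hcz : c ⬝ᵥ (z ∘ some) = -z none * (c ⬝ᵥ x) := by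
      rw [← hx, hM.mulVec_dotProduct, hsome, dotProduct_comm, smul_dotProduct, smul_eq_mul, hx]
    have hz0 : z none = 0 := by
      have : z none * (μ - c ⬝ᵥ x) = 0 := by linear_combination hnone - hcz
      exact (mul_eq_zero.mp this).resolve_right (sub_ne_zero.mpr hμ.symm)
    exact ⟨hz0, by rw [hsome, hz0, neg_zero, zero_smul]⟩
  have hmaps : ∀ z ∈ LinearMap.ker B.mulVecLin, LinearMap.funLeft K K some z ∈
      LinearMap.ker M.mulVecLin := fun z hz => (hker z hz).2
  have hinj : Function.Injective ((LinearMap.funLeft K K some).restrict hmaps) := by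
    intro z w hzw
    ext (_ | i)
    · rw [(hker z z.2).1, (hker w w.2).1]
    · exact congrFun (congrArg Subtype.val hzw) i
  have hB := B.mulVecLin.finrank_range_add_finrank_ker
  have hM' := M.mulVecLin.finrank_range_add_finrank_ker
  rw [Module.finrank_pi, Fintype.card_option] at hB
  rw [Module.finrank_pi] at hM'
  have hker_le := LinearMap.finrank_le_finrank_of_injective hinj
  rw [rank, rank]
  omega

end Matrix

section ShiftedGram

variable {ι E : Type*} [NormedAddCommGroup E] [InnerProductSpace ℝ E]
  {f : ι → E} {α β : ℝ} {M : Matrix ι ι ℝ}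

theorem sub_mul_apply_of_smul_eq_gram (hM : (α - β) • M = gram ℝ f - β • of fun _ _ => 1)
    (i j : ι) : (α - β) * M i j = ⟪f i, f j⟫_ℝ - β := by
  simpa using congrFun (congrFun hM i) j

theorem isSymm_of_smul_eq_gram (hαβ : α ≠ β)
    (hM : (α - β) • M = gram ℝ f - β • of fun _ _ => 1) : M.IsSymm := by
  ext i j
  refine mul_left_cancel₀ (sub_ne_zero.mpr hαβ) ?_
  rw [transpose_apply, sub_mul_apply_of_smul_eq_gram hM, sub_mul_apply_of_smul_eq_gram hM,
    real_inner_comm]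

theorem sub_mul_dotProduct_mulVec_self_of_smul_eq_gram [Fintype ι]
    (hM : (α - β) • M = gram ℝ f - β • of fun _ _ => 1) (x : ι → ℝ) :
    (α - β) * (x ⬝ᵥ M *ᵥ x) = ‖∑ i, x i • f i‖ ^ 2 - β * (∑ i, x i) ^ 2 := by
  have h := congrArg (fun A => x ⬝ᵥ A *ᵥ x) hM
  have hJ : x ⬝ᵥ (of fun _ _ => (1 : ℝ)) *ᵥ x = (∑ i, x i) ^ 2 := by
    simp [mulVec, dotProduct, ← Finset.sum_mul, sq]
  simp only [smul_mulVec, sub_mulVec, dotProduct_smul, dotProduct_sub, smul_eq_mul] at h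
  rw [h, hJ, ← star_trivial x, star_dotProduct_gram_mulVec, star_trivial,
    real_inner_self_eq_norm_sq]

theorem exists_mulVec_eq_one_of_smul_eq_gram [Fintype ι] [DecidableEq ι] (hβα : β < α)
    (hβ : β < 0) (hM : (α - β) • M = gram ℝ f - β • of fun _ _ => 1) :
    ∃ x, M *ᵥ x = fun _ => 1 := by
  refine (isHermitian_iff_isSymm.mpr (isSymm_of_smul_eq_gram hβα.ne' hM))
    |>.exists_mulVec_eq_of_forall_mulVec_eq_zero fun y hy => ?_
  have hquad := sub_mul_dotProduct_mulVec_self_of_smul_eq_gram hM y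
  rw [hy, dotProduct_zero, mul_zero] at hquad
  have hsum : (∑ i, y i) ^ 2 = 0 := by
    nlinarith [sq_nonneg ‖∑ i, y i • f i‖, sq_nonneg (∑ i, y i)]
  simpa [dotProduct] using hsum

theorem sum_le_of_mulVec_eq_one_of_smul_eq_gram [Fintype ι] (hβα : β < α) (hβ : β < 0)
    (hM : (α - β) • M = gram ℝ f - β • of fun _ _ => 1) {e : E} (he : ‖e‖ = 1)
    (hef : ∀ i, ⟪e, f i⟫_ℝ = α) {x : ι → ℝ} (hx : M *ᵥ x = fun _ => 1) :
    ∑ i, x i ≤ (α - β) / (α ^ 2 - β) := by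
  set w := ∑ i, x i • f i
  have hquad : (α - β) * ∑ i, x i = ‖w‖ ^ 2 - β * (∑ i, x i) ^ 2 := by
    rw [← sub_mul_dotProduct_mulVec_self_of_smul_eq_gram hM, hx]
    simp [dotProduct]
  have hinner : ⟪e, w⟫_ℝ = α * ∑ i, x i := by
    simp [w, inner_sum, inner_smul_right, hef, Finset.mul_sum, mul_comm]
  have hcs : (α * ∑ i, x i) ^ 2 ≤ ‖w‖ ^ 2 := by
    rw [← hinner]
    simpa [he, sq] using real_inner_mul_inner_self_le e w
  rw [le_div_iff₀ (by nlinarith)]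
  nlinarith [sq_nonneg (∑ i, x i)]

end ShiftedGram

section SphericalCode

variable {α β μ : ℝ} {d n : ℕ} {u : Fin n → EuclideanSpace ℝ (Fin d)}

theorem alphaAdj_add_smul_one_apply_self (i : Fin n) : (alphaAdj α u + μ • 1) i i = μ := by
  simp [alphaAdj]

theorem alphaAdj_add_smul_one_apply_of_adj {i j : Fin n} (h : (alphaGraph α u).Adj i j) :
    (alphaAdj α u + μ • 1) i j = 1 := by
  simp [alphaAdj, h.ne, show i ≠ j ∧ rinner (u i) (u j) = α from h]

theorem IsSphericalCode.sub_smul_alphaAdj_add_smul_one (hu : IsSphericalCode α β u)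
    (hβα : β < α) (hμ : μ = (1 - β) / (α - β)) :
    (α - β) • (alphaAdj α u + μ • 1) = gram ℝ u - β • of fun _ _ => 1 := by
  ext i j
  rw [Matrix.smul_apply, Matrix.sub_apply, Matrix.smul_apply, gram_apply, of_apply, smul_eq_mul,
    smul_eq_mul, mul_one]
  change _ = rinner (u i) (u j) - β
  by_cases hij : i = j
  · subst hij
    rw [alphaAdj_add_smul_one_apply_self, hμ, rinner, real_inner_self_eq_norm_sq, hu.1 i]
    field_simp [(sub_pos.mpr hβα).ne']
  rcases hu.2 i j hij with h | h
  · rw [alphaAdj_add_smul_one_apply_of_adj ⟨hij, h⟩, h]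
    ring
  · have hnadj : alphaAdj α u i j = 0 := if_neg fun ha => hβα.ne (h.symm.trans ha.2)
    rw [Matrix.add_apply, hnadj, Matrix.smul_apply, one_apply_ne hij, h]
    simp

end SphericalCode

theorem stmt6_general (d n : ℕ)
    (α β μ : ℝ) (hβα : β < α) (hα : α < 1) (hβ₀ : β < 0)
    (hμ : μ = (1 - β) / (α - β))
    (u : Fin n → EuclideanSpace ℝ (Fin d)) (hu : IsSphericalCode α β u)
    (v : Fin n)
    (M : Matrix ↥((alphaGraph α u).neighborSet v) ↥((alphaGraph α u).neighborSet v) ℝ)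
    (hM : M = (alphaAdj α u).submatrix Subtype.val Subtype.val + μ • 1) :
    (∃ x, M *ᵥ x = fun _ => 1) ∧
    (∀ N, M * N * M = M →
      (fun _ => (1 : ℝ)) ⬝ᵥ (N *ᵥ fun _ => 1) ≤ (α - β) / (α ^ 2 - β)) ∧
    (M.rank : ℤ) ≤ ((alphaAdj α u + μ • (1 : Matrix (Fin n) (Fin n) ℝ)).rank : ℤ) - 1 := by
  set B := alphaAdj α u + μ • (1 : Matrix (Fin n) (Fin n) ℝ)
  have hMB : M = B.submatrix Subtype.val Subtype.val := by
    rw [hM, ← submatrix_one _ Subtype.val_injective]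
    rfl
  have hMgram : (α - β) • M = gram ℝ (u ∘ Subtype.val) - β • of fun _ _ => 1 := by
    rw [hMB]
    exact congrArg (submatrix · Subtype.val Subtype.val)
      (hu.sub_smul_alphaAdj_add_smul_one hβα hμ)
  have hsymm := isSymm_of_smul_eq_gram hβα.ne' hMgram
  obtain ⟨x, hx⟩ := exists_mulVec_eq_one_of_smul_eq_gram hβα hβ₀ hMgram
  have hsum : (fun _ => 1) ⬝ᵥ x ≤ (α - β) / (α ^ 2 - β) := by
    simpa [dotProduct] using
      sum_le_of_mulVec_eq_one_of_smul_eq_gram hβα hβ₀ hMgram (hu.1 v) (fun i => i.2.2) hx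
  have hμ_gt : (α - β) / (α ^ 2 - β) < μ := by
    rw [hμ, div_lt_div_iff₀ (by nlinarith) (sub_pos.mpr hβα)]
    nlinarith [mul_pos (neg_pos.mpr hβ₀) (pow_pos (sub_pos.mpr hα) 2)]
  refine ⟨⟨x, hx⟩, fun N hN => ?_, ?_⟩
  · rw [hsymm.dotProduct_mulVec_eq_of_mul_mul_self hN hx, dotProduct_comm]
    exact hsum
  · let g : Option ((alphaGraph α u).neighborSet v) → Fin n := fun o => o.elim v Subtype.val
    have hborder := rank_add_one_le_of_border hsymm (B := B.submatrix g g)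
      (fun i k => by rw [hMB]; rfl)
      (fun i => alphaAdj_add_smul_one_apply_of_adj i.2.symm)
      (fun k => alphaAdj_add_smul_one_apply_of_adj k.2)
      (alphaAdj_add_smul_one_apply_self v) hx (hsum.trans_lt hμ_gt).ne
    have hsub := rank_submatrix_le B g g
    omega

/-- for the `α`-graph `G` of a spherical `{α,β}`-code and any vertex `v`,
the subgraph `G_v` induced by the open neighborhood of `v` satisfies: `j` lies in the
column space of `A_{G_v} + μI`, `jᵀNj ≤ (α-β)/(α²-β)` for any `{1}`-inverse `N`, and
`rank(A_{G_v} + μI) ≤ rank(A_G + μI) - 1`. -/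
theorem stmt6 (d n : ℕ)
    (α β μ : ℝ) (hβ₁ : -1 ≤ β) (hβα : β < α) (hα : α < 1) (hβ₀ : β < 0)
    (hμ : μ = (1 - β) / (α - β))
    (u : Fin n → EuclideanSpace ℝ (Fin d)) (hu : IsSphericalCode α β u)
    (v : Fin n)
    (M : Matrix ↥((alphaGraph α u).neighborSet v) ↥((alphaGraph α u).neighborSet v) ℝ)
    (hM : M = (alphaAdj α u).submatrix Subtype.val Subtype.val + μ • 1) :
    (∃ x, M *ᵥ x = fun _ => 1) ∧
    (∀ N, M * N * M = M →
      (fun _ => (1 : ℝ)) ⬝ᵥ (N *ᵥ fun _ => 1) ≤ (α - β) / (α ^ 2 - β)) ∧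
    (M.rank : ℤ) ≤ ((alphaAdj α u + μ • (1 : Matrix (Fin n) (Fin n) ℝ)).rank : ℤ) - 1 :=
  stmt6_general d n α β μ hβα hα hβ₀ hμ u hu v M hM
end
end

section
/- Let μ > 1 be a real constant and d a positive integer. Let G be a connected graph on n vertices with adjacency matrix A_G such that G is not the complete graph K_{d+1}, A_G + μI is positive semidefinite, the all-ones vector lies in the column space of A_G + μI, and ρ := rank(A_G + μI) ≤ d + 1. Set k = ⌊(d+1)/ρ⌋ and q = d + 1 - ρk. Then there exist real numbers α, β with -1 ≤ β < α < 1, β < 0 and (1-β)/(α-β) = μ, and a spherical {α,β}-code in ℝ^d of size k·n + q. -/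
open Matrix

noncomputable section

/-!
Write `A_G + μI` as the Gram matrix of vectors `w_i ∈ ℝ^ρ`. As `𝟙` lies in its column space,
some `c` has `⟪w_i, c⟫ = 1` for all `i`. The vectors `w_i / √μ` form a `{1/μ, 0}`-code; `k`
mutually orthogonal copies of it together with `q` further orthonormal vectors give a
`{1/μ, 0}`-code of size `kn + q` in `ℝ^(kρ+q) = ℝ^(d+1)`, every vector of which has inner product
`1/√μ` with `e = (c, …, c, 1/√μ, …, 1/√μ)`. Projecting onto `e^⊥ ≅ ℝ^d` and renormalizing turns
each inner product `γ` into `(γ - t)/(1 - t)` with `t = 1/(μ‖e‖²)`, so we get a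
`{(1/μ - t)/(1 - t), -t/(1 - t)}`-code, and `β ≥ -1` amounts to `t ≤ 1/2`, i.e.
`μk‖c‖² + q ≥ 2`. Cauchy–Schwarz for `⟪w_i, c⟫` gives `μ‖c‖² ≥ 1`, and for `⟪w_i + w_j, c⟫` with a
non-edge `ij` it gives `μ‖c‖² ≥ 2`. If `G` is complete, `A_G + μI = J + (μ - 1)I` is nonsingular,
so `ρ = n ≠ d + 1` and hence `k + q ≥ 2`.
-/

open Module
open scoped RealInnerProductSpace

theorem Matrix.PosSemidef.exists_gram_eq_s13 {n : Type*} [Fintype n] {M : Matrix n n ℝ}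
    (hM : M.PosSemidef) : ∃ w : n → EuclideanSpace ℝ (Fin M.rank), gram ℝ w = M := by
  classical
  open scoped MatrixOrder in
  obtain ⟨B, rfl⟩ := CStarAlgebra.nonneg_iff_eq_star_mul_self.mp hM.nonneg
  let v : n → EuclideanSpace ℝ n := fun i => WithLp.toLp 2 (Bᵀ i)
  have hv : finrank ℝ (Submodule.span ℝ (Set.range v)) = (star B * B).rank := by
    rw [star_eq_conjTranspose, rank_conjTranspose_mul_self, rank_eq_finrank_span_cols,
      ← (WithLp.linearEquiv 2 ℝ (n → ℝ)).symm.finrank_map_eq, Submodule.map_span,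
      ← Set.range_comp]
    rfl
  let b := (stdOrthonormalBasis ℝ (Submodule.span ℝ (Set.range v))).reindex (finCongr hv)
  refine ⟨fun i => b.repr ⟨v i, Submodule.subset_span (Set.mem_range_self i)⟩, ?_⟩
  ext i j
  simp [gram_apply, b.repr.inner_map_map, v, PiLp.inner_apply, mul_apply, mul_comm]

theorem inner_sum_smul_eq_gram_mulVec {n E : Type*} [Fintype n] [NormedAddCommGroup E]
    [InnerProductSpace ℝ E] (w : n → E) (z : n → ℝ) (i : n) :
    ⟪w i, ∑ j, z j • w j⟫ = (gram ℝ w *ᵥ z) i := by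
  simp [inner_sum, real_inner_smul_right, gram_apply, mulVec, dotProduct, mul_comm]

section Centering

variable {E : Type*} [NormedAddCommGroup E] [InnerProductSpace ℝ E] {ι : Type*} {d : ℕ}

theorem exists_euclideanSpace_inner_eq_inner_sub (hE : finrank ℝ E = d + 1) (x : ι → E) {e : E}
    (he : e ≠ 0) {s t : ℝ} (hxe : ∀ i, ⟪x i, e⟫ = s) (hst : s ^ 2 = t * ‖e‖ ^ 2) :
    ∃ u : ι → EuclideanSpace ℝ (Fin d), ∀ i j, ⟪u i, u j⟫ = ⟪x i, x j⟫ - t := by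
  have : Fact (finrank ℝ E = d + 1) := ⟨hE⟩
  have he2 : ‖e‖ ^ 2 ≠ 0 := by positivity
  have hy : ∀ i, x i - (s / ‖e‖ ^ 2) • e ∈ (ℝ ∙ e)ᗮ := fun i => by
    rw [Submodule.mem_orthogonal_singleton_iff_inner_right, inner_sub_right,
      real_inner_comm, hxe, real_inner_smul_right, real_inner_self_eq_norm_sq]
    field_simp
    ring
  let b := OrthonormalBasis.fromOrthogonalSpanSingleton (𝕜 := ℝ) d he
  refine ⟨fun i => b.repr ⟨_, hy i⟩, fun i j => ?_⟩
  rw [b.repr.inner_map_map, Submodule.coe_inner]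
  have hex : ∀ i, ⟪e, x i⟫ = s := fun i => real_inner_comm (x i) e ▸ hxe i
  simp only [inner_sub_left, inner_sub_right, real_inner_smul_left, real_inner_smul_right,
    hxe, hex, real_inner_self_eq_norm_sq e]
  field_simp
  linear_combination -hst

theorem exists_isSphericalCode_of_inner_eq_const (hE : finrank ℝ E = d + 1) {N : ℕ} (x : Fin N → E)
    {α₀ : ℝ} (hx1 : ∀ i, ‖x i‖ = 1) (hx : ∀ i j, i ≠ j → ⟪x i, x j⟫ = α₀ ∨ ⟪x i, x j⟫ = 0)
    {e : E} (he : e ≠ 0) {s t : ℝ} (hxe : ∀ i, ⟪x i, e⟫ = s) (hst : s ^ 2 = t * ‖e‖ ^ 2)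
    (ht : t < 1) :
    ∃ u : Fin N → EuclideanSpace ℝ (Fin d),
      IsSphericalCode ((α₀ - t) / (1 - t)) (-t / (1 - t)) u := by
  obtain ⟨u, hu⟩ := exists_euclideanSpace_inner_eq_inner_sub hE x he hxe hst
  have hu' : ∀ i j, ⟪(√(1 - t))⁻¹ • u i, (√(1 - t))⁻¹ • u j⟫ = (⟪x i, x j⟫ - t) / (1 - t) := by
    intro i j
    rw [real_inner_smul_left, real_inner_smul_right, hu, ← mul_assoc, ← mul_inv,
      Real.mul_self_sqrt (by linarith), inv_mul_eq_div]
  refine ⟨fun i => (√(1 - t))⁻¹ • u i, fun i => ?_, fun i j hij => ?_⟩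
  · rw [norm_eq_sqrt_real_inner, hu', real_inner_self_eq_norm_sq, hx1, one_pow,
      div_self (by linarith), Real.sqrt_one]
  · unfold rinner
    rw [hu']
    rcases hx i j hij with h | h <;> simp [h, neg_div]

end Centering

theorem sphericalCode_parameters_of_le_half {μ t : ℝ} (hμ : 1 < μ) (ht0 : 0 < t) (ht : t ≤ 1 / 2) :
    -1 ≤ -t / (1 - t) ∧ -t / (1 - t) < (μ⁻¹ - t) / (1 - t) ∧ (μ⁻¹ - t) / (1 - t) < 1 ∧
      -t / (1 - t) < 0 ∧ (1 - -t / (1 - t)) / ((μ⁻¹ - t) / (1 - t) - -t / (1 - t)) = μ := by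
  have h1t : 0 < 1 - t := by linarith
  have hμinv : μ⁻¹ < 1 := inv_lt_one_of_one_lt₀ hμ
  have hμinv0 : 0 < μ⁻¹ := by positivity
  refine ⟨?_, ?_, ?_, ?_, ?_⟩
  · rw [le_div_iff₀ h1t]; linarith
  · gcongr; linarith
  · rw [div_lt_one h1t]; linarith
  · exact div_neg_of_neg_of_pos (by linarith) h1t
  · have : μ ≠ 0 := by positivity
    field_simp
    ring

section Blocks

variable {κ ι σ τ : Type*} [Fintype κ] [Fintype ι] [Fintype σ]

def replicateVec (c : EuclideanSpace ℝ ι) (s : ℝ) : EuclideanSpace ℝ (κ × ι ⊕ σ) :=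
  WithLp.toLp 2 (Sum.elim (fun p => c p.2) fun _ => s)

theorem norm_replicateVec_sq (c : EuclideanSpace ℝ ι) (s : ℝ) :
    ‖(replicateVec c s : EuclideanSpace ℝ (κ × ι ⊕ σ))‖ ^ 2 =
      Fintype.card κ * ‖c‖ ^ 2 + Fintype.card σ * s ^ 2 := by
  simp [replicateVec, EuclideanSpace.norm_sq_eq, Fintype.sum_sum_type, Fintype.sum_prod_type]

variable [DecidableEq κ]

def blockVec (a : κ) (v : EuclideanSpace ℝ ι) : EuclideanSpace ℝ (κ × ι ⊕ σ) :=
  WithLp.toLp 2 (Sum.elim (fun p => if p.1 = a then v p.2 else 0) 0)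

theorem inner_blockVec_blockVec (a b : κ) (v w : EuclideanSpace ℝ ι) :
    ⟪(blockVec a v : EuclideanSpace ℝ (κ × ι ⊕ σ)), blockVec b w⟫ =
      if a = b then ⟪v, w⟫ else 0 := by
  rcases eq_or_ne a b with rfl | hab <;>
    simp [blockVec, PiLp.inner_apply, Fintype.sum_sum_type, Fintype.sum_prod_type,
      Finset.sum_ite_eq', *]

theorem inner_blockVec_replicateVec (a : κ) (v c : EuclideanSpace ℝ ι) (s : ℝ) :
    ⟪(blockVec a v : EuclideanSpace ℝ (κ × ι ⊕ σ)), replicateVec c s⟫ = ⟪v, c⟫ := by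
  simp [blockVec, replicateVec, PiLp.inner_apply, Fintype.sum_sum_type, Fintype.sum_prod_type]

theorem inner_blockVec_single [DecidableEq ι] [DecidableEq σ] (a : κ) (v : EuclideanSpace ℝ ι)
    (m : σ) :
    ⟪(blockVec a v : EuclideanSpace ℝ (κ × ι ⊕ σ)), EuclideanSpace.single (Sum.inr m) 1⟫ = 0 := by
  simp [blockVec, EuclideanSpace.inner_single_right]

variable [DecidableEq ι] [DecidableEq σ]

def blockFamily (w : τ → EuclideanSpace ℝ ι) : κ × τ ⊕ σ → EuclideanSpace ℝ (κ × ι ⊕ σ) :=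
  Sum.elim (fun p => blockVec p.1 (w p.2)) fun m => EuclideanSpace.single (Sum.inr m) 1

theorem norm_blockFamily {w : τ → EuclideanSpace ℝ ι} (hw : ∀ i, ‖w i‖ = 1)
    (v : κ × τ ⊕ σ) : ‖blockFamily w v‖ = 1 := by
  rcases v with ⟨a, i⟩ | m
  · rw [norm_eq_sqrt_real_inner, blockFamily, Sum.elim_inl, inner_blockVec_blockVec, if_pos rfl,
      real_inner_self_eq_norm_sq, hw, one_pow, Real.sqrt_one]
  · simp [blockFamily]

theorem inner_blockFamily_of_ne {w : τ → EuclideanSpace ℝ ι} {α₀ : ℝ}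
    (hw : ∀ i j, i ≠ j → ⟪w i, w j⟫ = α₀ ∨ ⟪w i, w j⟫ = 0) (v v' : κ × τ ⊕ σ) (hv : v ≠ v') :
    ⟪blockFamily w v, blockFamily w v'⟫ = α₀ ∨ ⟪blockFamily w v, blockFamily w v'⟫ = 0 := by
  rcases v with ⟨a, i⟩ | m <;> rcases v' with ⟨b, j⟩ | m'
  · simp only [blockFamily, Sum.elim_inl, inner_blockVec_blockVec]
    rcases eq_or_ne a b with rfl | hab
    · simpa using hw i j (by rintro rfl; exact hv rfl)
    · simp [hab]
  · simp [blockFamily, inner_blockVec_single]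
  · simp [blockFamily, real_inner_comm, inner_blockVec_single]
  · have : m' ≠ m := by rintro rfl; exact hv rfl
    simp [blockFamily, EuclideanSpace.inner_single_right, this]

theorem inner_blockFamily_replicateVec {w : τ → EuclideanSpace ℝ ι} {c : EuclideanSpace ℝ ι}
    {s : ℝ} (hwc : ∀ i, ⟪w i, c⟫ = s) (v : κ × τ ⊕ σ) :
    ⟪blockFamily w v, replicateVec c s⟫ = s := by
  rcases v with ⟨a, i⟩ | m
  · rw [blockFamily, Sum.elim_inl, inner_blockVec_replicateVec, hwc]
  · simp [blockFamily, replicateVec, EuclideanSpace.inner_single_left]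

end Blocks

section Graph

variable {V F : Type*} [DecidableEq V] [NormedAddCommGroup F] [InnerProductSpace ℝ F]
  {G : SimpleGraph V} [DecidableRel G.Adj] {μ : ℝ} {w : V → F}

theorem inner_eq_of_gram_eq_adjMatrix_add_smul_one (hw : gram ℝ w = G.adjMatrix ℝ + μ • 1)
    (i j : V) : ⟪w i, w j⟫ = if i = j then μ else if G.Adj i j then 1 else 0 := by
  rw [← gram_apply (𝕜 := ℝ), hw]
  rcases eq_or_ne i j with rfl | hij <;> simp [*]

theorem one_le_mul_norm_sq_of_gram_eq (hw : gram ℝ w = G.adjMatrix ℝ + μ • 1) {c : F}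
    (hwc : ∀ i, ⟪w i, c⟫ = 1) (i : V) : 1 ≤ μ * ‖c‖ ^ 2 := by
  have := real_inner_mul_inner_self_le (w i) c
  rwa [hwc, inner_eq_of_gram_eq_adjMatrix_add_smul_one hw, if_pos rfl,
    real_inner_self_eq_norm_sq, mul_one] at this

theorem two_le_mul_norm_sq_of_gram_eq (hw : gram ℝ w = G.adjMatrix ℝ + μ • 1) {c : F}
    (hwc : ∀ i, ⟪w i, c⟫ = 1) {i j : V} (hij : i ≠ j) (hadj : ¬G.Adj i j) :
    2 ≤ μ * ‖c‖ ^ 2 := by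
  have := real_inner_mul_inner_self_le (w i + w j) c
  simp only [inner_add_left, inner_add_right, hwc, inner_eq_of_gram_eq_adjMatrix_add_smul_one hw,
    hij, hij.symm, hadj, G.adj_comm j i, real_inner_self_eq_norm_sq] at this
  norm_num at this
  linarith

theorem norm_inv_sqrt_smul_of_gram_eq (hμ : 0 < μ) (hw : gram ℝ w = G.adjMatrix ℝ + μ • 1)
    (i : V) : ‖(√μ)⁻¹ • w i‖ = 1 := by
  have hwi : ‖w i‖ = √μ := by
    rw [norm_eq_sqrt_real_inner, inner_eq_of_gram_eq_adjMatrix_add_smul_one hw, if_pos rfl]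
  rw [norm_smul, hwi, norm_inv, Real.norm_of_nonneg (Real.sqrt_nonneg μ),
    inv_mul_cancel₀ (by positivity)]

theorem inner_inv_sqrt_smul_of_gram_eq (hμ : 0 < μ) (hw : gram ℝ w = G.adjMatrix ℝ + μ • 1)
    {i j : V} (hij : i ≠ j) :
    ⟪(√μ)⁻¹ • w i, (√μ)⁻¹ • w j⟫ = μ⁻¹ ∨ ⟪(√μ)⁻¹ • w i, (√μ)⁻¹ • w j⟫ = 0 := by
  rw [real_inner_smul_left, real_inner_smul_right, inner_eq_of_gram_eq_adjMatrix_add_smul_one hw,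
    ← mul_assoc, ← mul_inv, Real.mul_self_sqrt hμ.le]
  by_cases hadj : G.Adj i j <;> simp [hij, hadj]

theorem rank_adjMatrix_add_smul_one_of_eq_top [Fintype V] (hμ : 1 < μ) (hG : G = ⊤) :
    (G.adjMatrix ℝ + μ • 1).rank = Fintype.card V := by
  subst hG
  have hsplit : (⊤ : SimpleGraph V).adjMatrix ℝ + μ • 1 = (μ - 1) • 1 + vecMulVec 1 1 := by
    ext i j
    rcases eq_or_ne i j with rfl | hij <;> simp [*]
  have hpos : ((⊤ : SimpleGraph V).adjMatrix ℝ + μ • 1).PosDef := by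
    rw [hsplit]
    exact (PosDef.one.smul (sub_pos.mpr hμ)).add_posSemidef
      (by simpa using posSemidef_vecMulVec_self_star (1 : V → ℝ))
  exact rank_of_isUnit _ hpos.isUnit

theorem two_le_mul_mul_norm_sq_add {n d k q : ℕ} {G : SimpleGraph (Fin n)} [DecidableRel G.Adj]
    {w : Fin n → F} (hμ : 1 < μ) (hw : gram ℝ w = G.adjMatrix ℝ + μ • 1) {c : F}
    (hwc : ∀ i, ⟪w i, c⟫ = 1) (i₀ : Fin n)
    (hnotK : ¬Nonempty (G ≃g (⊤ : SimpleGraph (Fin (d + 1))))) (hk : 1 ≤ k)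
    (hdim : k * (G.adjMatrix ℝ + μ • 1).rank + q = d + 1) :
    2 ≤ μ * k * ‖c‖ ^ 2 + q := by
  by_cases hG : G = ⊤
  · have hρ : (G.adjMatrix ℝ + μ • 1).rank = n := by
      rw [rank_adjMatrix_add_smul_one_of_eq_top hμ hG, Fintype.card_fin]
    have hn : n ≠ d + 1 := by
      rintro rfl
      exact hnotK ⟨hG ▸ SimpleGraph.Iso.refl⟩
    have hkq : 2 ≤ k + q := by
      rcases Nat.lt_or_ge k 2 with hk2 | hk2
      · obtain rfl : k = 1 := by omega
        omega
      · omega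
    have hkq' : (2 : ℝ) ≤ k + q := by exact_mod_cast hkq
    have := one_le_mul_norm_sq_of_gram_eq hw hwc i₀
    have hk' : (1 : ℝ) ≤ k := by exact_mod_cast hk
    nlinarith
  · obtain ⟨i, j, hij, hadj⟩ := SimpleGraph.ne_top_iff_exists_not_adj.mp hG
    have := two_le_mul_norm_sq_of_gram_eq hw hwc hij hadj
    have hk' : (1 : ℝ) ≤ k := by exact_mod_cast hk
    nlinarith [Nat.cast_nonneg (α := ℝ) q]

end Graph

theorem exists_isSphericalCode_of_gram_eq_adjMatrix_add_smul_one {n ρ d k q : ℕ}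
    {G : SimpleGraph (Fin n)} [DecidableRel G.Adj] {μ : ℝ} (hμ : 1 < μ)
    {w : Fin n → EuclideanSpace ℝ (Fin ρ)} (hw : gram ℝ w = G.adjMatrix ℝ + μ • 1)
    {c : EuclideanSpace ℝ (Fin ρ)} (hwc : ∀ i, ⟪w i, c⟫ = 1) (hdim : k * ρ + q = d + 1)
    (hbound : 2 ≤ μ * k * ‖c‖ ^ 2 + q) :
    ∃ α β : ℝ, -1 ≤ β ∧ β < α ∧ α < 1 ∧ β < 0 ∧ (1 - β) / (α - β) = μ ∧
      ∃ u : Fin (k * n + q) → EuclideanSpace ℝ (Fin d), IsSphericalCode α β u := by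
  have hμ0 : 0 < μ := by linarith
  set s := (√μ)⁻¹
  have hs : s ^ 2 = μ⁻¹ := by rw [inv_pow, Real.sq_sqrt hμ0.le]
  set e : EuclideanSpace ℝ (Fin k × Fin ρ ⊕ Fin q) := replicateVec c s
  have he : 2 * μ⁻¹ ≤ ‖e‖ ^ 2 := by
    rw [norm_replicateVec_sq, Fintype.card_fin, Fintype.card_fin, hs]
    calc 2 * μ⁻¹ ≤ μ⁻¹ * (μ * k * ‖c‖ ^ 2 + q) := by nlinarith [inv_pos.mpr hμ0]
      _ = k * ‖c‖ ^ 2 + q * μ⁻¹ := by field_simp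
  have he0 : 0 < ‖e‖ ^ 2 := lt_of_lt_of_le (by positivity) he
  set t := μ⁻¹ / ‖e‖ ^ 2
  have ht : t ≤ 1 / 2 := by
    rw [div_le_iff₀ he0]
    linarith
  obtain ⟨hβ, hβα, hα, hβ0, hμαβ⟩ := sphericalCode_parameters_of_le_half hμ (by positivity) ht
  let eqv : Fin (k * n + q) ≃ Fin k × Fin n ⊕ Fin q :=
    finSumFinEquiv.symm.trans (finProdFinEquiv.symm.sumCongr (Equiv.refl _))
  let x := blockFamily (fun i => s • w i) ∘ eqv
  have hE : finrank ℝ (EuclideanSpace ℝ (Fin k × Fin ρ ⊕ Fin q)) = d + 1 := by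
    simp [hdim]
  have hx1 : ∀ i, ‖x i‖ = 1 := fun i =>
    norm_blockFamily (norm_inv_sqrt_smul_of_gram_eq hμ0 hw) _
  have hx : ∀ i j, i ≠ j → ⟪x i, x j⟫ = μ⁻¹ ∨ ⟪x i, x j⟫ = 0 := fun i j hij =>
    inner_blockFamily_of_ne (fun _ _ => inner_inv_sqrt_smul_of_gram_eq hμ0 hw) _ _
      (eqv.injective.ne hij)
  have hxe : ∀ i, ⟪x i, e⟫ = s := fun i =>
    inner_blockFamily_replicateVec (fun i => by rw [real_inner_smul_left, hwc, mul_one]) _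
  have hst : s ^ 2 = t * ‖e‖ ^ 2 := by rw [hs, div_mul_cancel₀ _ he0.ne']
  obtain ⟨u, hu⟩ := exists_isSphericalCode_of_inner_eq_const hE x hx1 hx
    (fun h => by simp [h] at he0) hxe hst (by linarith)
  exact ⟨_, _, hβ, hβα, hα, hβ0, hμαβ, u, hu⟩

theorem stmt13_general (μ : ℝ) (hμ : 1 < μ) (d n : ℕ)
    (G : SimpleGraph (Fin n)) [DecidableRel G.Adj]
    (hconn : G.Connected)
    (hnotK : ¬ Nonempty (G ≃g (⊤ : SimpleGraph (Fin (d + 1)))))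
    (M : Matrix (Fin n) (Fin n) ℝ)
    (hM : M = G.adjMatrix ℝ + μ • (1 : Matrix (Fin n) (Fin n) ℝ))
    (hpsd : M.PosSemidef)
    (hj : ∃ x : Fin n → ℝ, M *ᵥ x = fun _ => 1)
    (ρ : ℕ) (hρ : ρ = M.rank) (hρd : ρ ≤ d + 1)
    (k q : ℕ) (hk : k = (d + 1) / ρ) (hq : q = d + 1 - ρ * k) :
    ∃ α β : ℝ, -1 ≤ β ∧ β < α ∧ α < 1 ∧ β < 0 ∧ (1 - β) / (α - β) = μ ∧
      ∃ u : Fin (k * n + q) → EuclideanSpace ℝ (Fin d), IsSphericalCode α β u := by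
  obtain ⟨z, hz⟩ := hj
  obtain ⟨i₀⟩ := hconn.nonempty
  obtain ⟨w, hw⟩ : ∃ w : Fin n → EuclideanSpace ℝ (Fin ρ), gram ℝ w = M :=
    hρ ▸ hpsd.exists_gram_eq_s13
  subst hM
  have hwc : ∀ i, ⟪w i, ∑ j, z j • w j⟫ = 1 := fun i => by
    rw [inner_sum_smul_eq_gram_mulVec, hw, hz]
  have hρ0 : 0 < ρ := Nat.pos_of_ne_zero fun h => by
    subst h
    simpa [Subsingleton.elim (w i₀) 0] using hwc i₀
  have hk1 : 1 ≤ k := hk ▸ (Nat.one_le_div_iff hρ0).mpr hρd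
  have hdim : k * ρ + q = d + 1 := by
    have := Nat.div_mul_le_self (d + 1) ρ
    rw [← hk] at this
    rw [hq, mul_comm ρ k]
    omega
  exact exists_isSphericalCode_of_gram_eq_adjMatrix_add_smul_one hμ hw hwc hdim
    (two_le_mul_mul_norm_sq_add hμ hw hwc i₀ hnotK hk1 (hρ ▸ hdim))

/-- from a connected graph `G ≠ K_{d+1}` with `A_G + μI` positive
semidefinite, all-ones vector in the column space, and `ρ = rank(A_G + μI) ≤ d + 1`, one
obtains reals `-1 ≤ β < α < 1`, `β < 0` with `(1-β)/(α-β) = μ` and a spherical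
`{α,β}`-code in `ℝ^d` of size `k·n + q`, where `k = ⌊(d+1)/ρ⌋` and `q = d + 1 - ρk`. -/
theorem stmt13 (μ : ℝ) (hμ : 1 < μ) (d n : ℕ) (hd : 0 < d)
    (G : SimpleGraph (Fin n)) [DecidableRel G.Adj]
    (hconn : G.Connected)
    (hnotK : ¬ Nonempty (G ≃g (⊤ : SimpleGraph (Fin (d + 1)))))
    (M : Matrix (Fin n) (Fin n) ℝ)
    (hM : M = G.adjMatrix ℝ + μ • (1 : Matrix (Fin n) (Fin n) ℝ))
    (hpsd : M.PosSemidef)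
    (hj : ∃ x : Fin n → ℝ, M *ᵥ x = fun _ => 1)
    (ρ : ℕ) (hρ : ρ = M.rank) (hρd : ρ ≤ d + 1)
    (k q : ℕ) (hk : k = (d + 1) / ρ) (hq : q = d + 1 - ρ * k) :
    ∃ α β : ℝ, -1 ≤ β ∧ β < α ∧ α < 1 ∧ β < 0 ∧ (1 - β) / (α - β) = μ ∧
      ∃ u : Fin (k * n + q) → EuclideanSpace ℝ (Fin d), IsSphericalCode α β u :=
  stmt13_general μ hμ d n G hconn hnotK M hM hpsd hj ρ hρ hρd k q hk hq
end
end
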